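/- arXiv:1606.01967 — 12 statements merged into one kernel-verified Lean document; each statement's English description precedes it below -/
import Mathlib

section
/- If for a uniform space X the set C_ω(X) of ω-continuous real-valued functions on X is ω^ω-dominated in ℝ^X, then X is ω-narrow. -/
/-!
Given an entourage `U`, metrize a coarser countably generated uniformity: this gives a uniformly
continuous map `p` into a pseudometric space whose `r`-balls pull back into `U`, and a maximal
`r`-separated set `C` for `p` is then `U`-dense. If `C` were uncountable, every function
`C → ℕ` would extend to an ω-continuous function (a sum of Lipschitz bumps with disjoint
supports), so `ℕ^C` would be `ω^ω`-dominated. That fails already on `ω₁ ⊆ C`: code each `η < ξ`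
by an injection `Iio ξ → ℕ`; a condensation point of the dominating witnesses in the Lindelöf
space `ℕ → ℕ` yields infinitely many of them below a single `β`, and then `φ β ξ` bounds
infinitely many distinct codes at a common `ξ`.
-/

open Set Filter Topology Uniformity
open scoped SetRel

universe u

/-- A map `f : X → M` from a uniform space to a pseudometric space is ω-continuous
if for every `ε > 0` there is a countable family `𝒱` of entourages of `X` such that
every `x ∈ X` admits `V ∈ 𝒱` with `dist (f y) (f x) < ε` for all `y ∈ V[x]`. -/
def OmegaContinuous {X : Type*} [UniformSpace X] {M : Type*} [PseudoMetricSpace M]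
    (f : X → M) : Prop :=
  ∀ ε : ℝ, 0 < ε → ∃ 𝒱 : Set (Set (X × X)), 𝒱.Countable ∧ (∀ V ∈ 𝒱, V ∈ uniformity X) ∧
    ∀ x : X, ∃ V ∈ 𝒱, ∀ y : X, (x, y) ∈ V → dist (f y) (f x) < ε

theorem OmegaContinuous.comp_uniformContinuous {X Y M : Type*} [UniformSpace X] [UniformSpace Y]
    [PseudoMetricSpace M] {f : Y → M} (hf : OmegaContinuous f) {p : X → Y}
    (hp : UniformContinuous p) : OmegaContinuous (f ∘ p) := by
  intro ε hε
  obtain ⟨𝒱, h𝒱, h𝒱U, hf⟩ := hf ε hε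
  refine ⟨(fun V => (fun q : X × X => (p q.1, p q.2)) ⁻¹' V) '' 𝒱, h𝒱.image _,
    ?_, fun x => ?_⟩
  · rintro _ ⟨V, hV, rfl⟩
    exact hp (h𝒱U V hV)
  · obtain ⟨V, hV, hfV⟩ := hf (p x)
    exact ⟨_, mem_image_of_mem _ hV, fun y hy => hfV (p y) hy⟩

theorem omegaContinuous_of_forall_exists_dist_le_mul_dist {Y M : Type*} [PseudoMetricSpace Y]
    [PseudoMetricSpace M] {f : Y → M} {δ : ℝ} (hδ : 0 < δ)
    (hf : ∀ z, ∃ K : ℝ, ∀ w, dist w z < δ → dist (f w) (f z) ≤ K * dist w z) :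
    OmegaContinuous f := by
  intro ε hε
  refine ⟨range fun n : ℕ => {q : Y × Y | dist q.1 q.2 < min δ (ε / (n + 1))},
    countable_range _, ?_, fun z => ?_⟩
  · rintro _ ⟨n, rfl⟩
    exact Metric.dist_mem_uniformity (by positivity)
  · obtain ⟨K, hK⟩ := hf z
    refine ⟨_, ⟨⌈K⌉₊, rfl⟩, fun w hw => ?_⟩
    rw [mem_ofPred_eq, dist_comm, lt_min_iff] at hw
    calc dist (f w) (f z) ≤ K * dist w z := hK w hw.1
      _ ≤ (⌈K⌉₊ + 1) * dist w z := by
          gcongr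
          exact (Nat.le_ceil K).trans (by linarith)
      _ < (⌈K⌉₊ + 1) * (ε / (⌈K⌉₊ + 1)) := by gcongr; exact hw.2
      _ = ε := by field_simp

theorem exists_omegaContinuous_eq_of_pairwise_le_dist {Y ι : Type*} [PseudoMetricSpace Y]
    {r : ℝ} (hr : 0 < r) {y : ι → Y} (hy : Pairwise fun ξ η => r ≤ dist (y ξ) (y η))
    (a : ι → ℝ) : ∃ f : Y → ℝ, OmegaContinuous f ∧ ∀ ξ, f (y ξ) = a ξ := by
  let b : ι → Y → ℝ := fun ξ z => max (1 - 4 / r * dist z (y ξ)) 0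
  have hb_eq_zero : ∀ ξ z, r / 4 ≤ dist z (y ξ) → b ξ z = 0 := by
    intro ξ z hz
    refine max_eq_right (sub_nonpos.2 ?_)
    rw [div_mul_eq_mul_div, one_le_div hr]
    linarith
  have hb_sub : ∀ ξ z w, |b ξ w - b ξ z| ≤ 4 / r * dist w z := by
    intro ξ z w
    calc |b ξ w - b ξ z| ≤ |(1 - 4 / r * dist w (y ξ)) - (1 - 4 / r * dist z (y ξ))| :=
          abs_max_sub_max_le_abs _ _ _
      _ = |4 / r * (dist z (y ξ) - dist w (y ξ))| := by congr 1; ring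
      _ = 4 / r * |dist w (y ξ) - dist z (y ξ)| := by
          rw [abs_mul, abs_of_pos (by positivity), abs_sub_comm]
      _ ≤ 4 / r * dist w z := by gcongr; exact abs_dist_sub_le _ _ _
  have hb_unique : ∀ ξ η z, η ≠ ξ → dist z (y ξ) < 3 * r / 4 → b η z = 0 := by
    intro ξ η z hne hz
    refine hb_eq_zero η z ?_
    have := (hy hne).trans (dist_triangle_left (y η) (y ξ) z)
    linarith
  let f : Y → ℝ := fun z => ∑' ξ, a ξ * b ξ z
  have hf_eq : ∀ ξ z, dist z (y ξ) < 3 * r / 4 → f z = a ξ * b ξ z := fun ξ z hz =>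
    tsum_eq_single ξ fun η hne => by rw [hb_unique ξ η z hne hz, mul_zero]
  refine ⟨f, omegaContinuous_of_forall_exists_dist_le_mul_dist (δ := r / 4) (by positivity)
    fun z => ?_, fun ξ => ?_⟩
  · by_cases hz : ∃ ξ, dist z (y ξ) < r / 2
    · obtain ⟨ξ, hξ⟩ := hz
      refine ⟨|a ξ| * (4 / r), fun w hw => ?_⟩
      have hw' : dist w (y ξ) < 3 * r / 4 := by linarith [dist_triangle w z (y ξ)]
      rw [hf_eq ξ w hw', hf_eq ξ z (by linarith), Real.dist_eq, ← mul_sub, abs_mul, mul_assoc]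
      exact mul_le_mul_of_nonneg_left (hb_sub ξ z w) (abs_nonneg _)
    · push Not at hz
      have hf_zero : ∀ w, dist w z < r / 4 → f w = 0 := fun w hw =>
        (tsum_congr fun η => by
          rw [hb_eq_zero η w (by linarith [hz η, dist_triangle z w (y η), dist_comm w z]),
            mul_zero]).trans tsum_zero
      exact ⟨0, fun w hw => by simp [hf_zero w hw, hf_zero z (by simpa using by positivity)]⟩
  · rw [hf_eq ξ (y ξ) (by simpa using by positivity)]
    simp [b]

theorem exists_uniformSpace_ge_isCountablyGenerated_mem {X : Type*} [u : UniformSpace X]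
    {U : Set (X × X)} (hU : U ∈ 𝓤 X) :
    ∃ v : UniformSpace X, u ≤ v ∧ (𝓤[v]).IsCountablyGenerated ∧ U ∈ 𝓤[v] := by
  choose! g hg_mem hg_symm hg_comp using fun s (hs : s ∈ 𝓤 X) => comp_symm_mem_uniformity_sets hs
  let V : ℕ → Set (X × X) := fun n => g^[n] U
  have hV_mem : ∀ n, V n ∈ 𝓤 X := fun n => by
    induction n with
    | zero => exact hU
    | succ n ih => simpa only [V, Function.iterate_succ_apply'] using hg_mem _ ih
  have hV_comp : ∀ n, V (n + 1) ○ V (n + 1) ⊆ V n := fun n => by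
    simpa only [V, Function.iterate_succ_apply'] using hg_comp _ (hV_mem n)
  have hV_symm : ∀ n, SetRel.IsSymm (V (n + 1)) := fun n => by
    simpa only [V, Function.iterate_succ_apply'] using hg_symm _ (hV_mem n)
  have hV_refl : ∀ n x, (x, x) ∈ V n := fun n x => refl_mem_uniformity (hV_mem n)
  have hV_succ : ∀ n, V (n + 1) ⊆ V n := fun n q hq => hV_comp n ⟨q.2, hq, hV_refl _ _⟩
  have hB : (⨅ n, 𝓟 (V n)).HasAntitoneBasis V := .iInf_principal (antitone_nat_of_succ_le hV_succ)
  let v : UniformSpace X := .ofCore <| .mk' (⨅ n, 𝓟 (V n))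
    (fun s hs x => by
      obtain ⟨n, hn⟩ := hB.mem_iff.1 hs
      exact hn (hV_refl n x))
    (fun s hs => by
      obtain ⟨n, hn⟩ := hB.mem_iff.1 hs
      refine hB.mem_iff.2 ⟨n + 1, fun q hq => hn (hV_succ n ?_)⟩
      exact (hV_symm n).symm _ _ hq)
    (fun s hs => by
      obtain ⟨n, hn⟩ := hB.mem_iff.1 hs
      exact ⟨V (n + 1), hB.mem (n + 1), (hV_comp n).trans hn⟩)
  refine ⟨v, fun s hs => ?_, hB.isCountablyGenerated, hB.mem 0⟩
  obtain ⟨n, hn⟩ := hB.mem_iff.1 hs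
  exact mem_of_superset (hV_mem n) hn

theorem exists_uniformContinuous_pseudoMetricSpace {X : Type u} [UniformSpace X]
    {U : Set (X × X)} (hU : U ∈ 𝓤 X) :
    ∃ (Y : Type u) (_ : PseudoMetricSpace Y) (p : X → Y), UniformContinuous p ∧
      ∃ r > 0, ∀ x x', dist (p x) (p x') < r → (x, x') ∈ U := by
  obtain ⟨v, huv, hv, hUv⟩ := exists_uniformSpace_ge_isCountablyGenerated_mem hU
  obtain ⟨m, hm⟩ := @UniformSpace.metrizable_uniformity X v hv
  subst hm
  obtain ⟨r, hr, hrU⟩ := Metric.mem_uniformity_dist.1 hUv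
  exact ⟨X, m, id, uniformContinuous_iff_le_comap.2 (by rwa [uniformSpace_comap_id, id]),
    r, hr, fun x x' h => hrU h⟩

theorem SetRel.exists_isSeparated_isCover {X : Type*} (R : SetRel X X) [R.IsRefl] [R.IsSymm] :
    ∃ N, R.IsSeparated N ∧ R.IsCover univ N := by
  obtain ⟨N, hN⟩ := zorn_subset {N : Set X | R.IsSeparated N} fun c hc hchain =>
    ⟨⋃₀ c, (pairwise_sUnion hchain.directedOn).2 hc, fun _ => subset_sUnion_of_mem⟩
  exact ⟨N, hN.prop,
    .of_maximal_isSeparated ⟨⟨subset_univ _, hN.prop⟩, fun M hM hNM => hN.2 hM.2 hNM⟩⟩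

theorem exists_forall_mem_nhds_not_countable_preimage {ι Z : Type*} [TopologicalSpace Z]
    [LindelofSpace Z] [Uncountable ι] (f : ι → Z) :
    ∃ z, ∀ N ∈ 𝓝 z, ¬ (f ⁻¹' N).Countable := by
  by_contra! h
  choose N hN hN_cnt using h
  obtain ⟨t, ht_cnt, -, hcover⟩ := isLindelof_univ.elim_nhds_subcover N fun z _ => hN z
  refine not_countable_univ ((ht_cnt.biUnion fun z _ => hN_cnt z).mono fun η _ => ?_)
  simpa using hcover (mem_univ (f η))

theorem exists_countable_infinite_forall_le {ι : Type*} [Uncountable ι] (α : ι → ℕ → ℕ) :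
    ∃ β : ℕ → ℕ, ∃ s : Set ι, s.Countable ∧ s.Infinite ∧ ∀ η ∈ s, α η ≤ β := by
  obtain ⟨a, ha⟩ := exists_forall_mem_nhds_not_countable_preimage α
  have hS : ∀ n, {η | ∀ j ∈ Finset.range n, α η j = a j}.Infinite := fun n hfin =>
    ha {γ | ∀ j ∈ Finset.range n, γ j = a j} ((Filter.eventually_all_finset _).2 fun j _ =>
      (continuous_apply j).continuousAt.preimage_mem_nhds (mem_nhds_discrete.2 (mem_singleton _)))
      hfin.countable
  -- `F m` has `m` points agreeing with `a` below `m`, so at coordinate `j` only the finitely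
  -- many points of `F 0, …, F j` can exceed `a j`.
  choose F hF_sub hF_card using fun n => (hS n).exists_subset_card_eq n
  refine ⟨fun j => max (a j) ((Finset.range (j + 1)).sup fun m => (F m).sup fun η => α η j),
    ⋃ m, F m, countable_iUnion fun m => (F m).countable_toSet, fun hfin => ?_, fun η hη j => ?_⟩
  · have := Finset.card_le_card (s := F (hfin.toFinset.card + 1)) fun η hη =>
      hfin.mem_toFinset.2 (mem_iUnion.2 ⟨_, hη⟩)
    rw [hF_card] at this
    omega
  · obtain ⟨m, hm⟩ := mem_iUnion.1 hη
    by_cases hjm : j < m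
    · exact ((hF_sub m hm) j (Finset.mem_range.2 hjm)).le.trans (le_max_left _ _)
    · exact le_max_of_le_right <|
        Finset.le_sup_of_le (Finset.mem_range.2 (by omega)) (Finset.le_sup (f := fun η => α η j) hm)

theorem exists_forall_lt_of_countable {ι : Type*} [LinearOrder ι] [Uncountable ι]
    (hIio : ∀ ξ : ι, (Iio ξ).Countable) {s : Set ι} (hs : s.Countable) :
    ∃ ξ, ∀ η ∈ s, η < ξ := by
  by_contra! h
  refine not_countable_univ ((hs.biUnion fun η _ => (hIio η).insert η).mono fun ξ _ => ?_)
  obtain ⟨η, hη, hξη⟩ := h ξ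
  exact mem_biUnion hη (by rwa [Iio_insert])

theorem not_forall_exists_le_of_forall_countable_Iio {ι : Type*} [LinearOrder ι] [Uncountable ι]
    (hIio : ∀ ξ : ι, (Iio ξ).Countable) (φ : (ℕ → ℕ) → ι → ℝ) (hφ : Monotone φ) :
    ¬ ∀ H : ι → ℕ, ∃ α, (fun ξ => (H ξ : ℝ)) ≤ φ α := by
  intro hdom
  choose e he using fun ξ => Set.countable_iff_exists_injective.1 (hIio ξ)
  let H : ι → ι → ℕ := fun η ξ => if h : η < ξ then e ξ ⟨η, h⟩ else 0
  choose α hα using fun η => hdom (H η)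
  obtain ⟨β, s, hs_cnt, hs_inf, hsβ⟩ := exists_countable_infinite_forall_le α
  obtain ⟨ξ, hξ⟩ := exists_forall_lt_of_countable hIio hs_cnt
  have hinj : InjOn (fun η => H η ξ) s := fun η hη η' hη' h => by
    simp only [H, dif_pos (hξ η hη), dif_pos (hξ η' hη')] at h
    exact congrArg Subtype.val (he ξ h)
  -- infinitely many distinct codes at `ξ`, all below `φ β ξ`
  refine (hs_inf.image hinj).not_bddAbove ⟨⌊φ β ξ⌋₊, ?_⟩
  rintro _ ⟨η, hη, rfl⟩
  exact Nat.le_floor ((hα η ξ).trans (hφ (hsβ η hη) ξ))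

theorem not_forall_exists_le_of_uncountable {S : Type u} [Uncountable S]
    (φ : (ℕ → ℕ) → S → ℝ) (hφ : Monotone φ) :
    ¬ ∀ H : S → ℕ, ∃ α, (fun s => (H s : ℝ)) ≤ φ α := by
  let ι := (Ordinal.omega.{u} 1).ToType
  have : Uncountable ι := by
    rw [← Cardinal.aleph0_lt_mk_iff]
    simp [ι]
  have hIio : ∀ ξ : ι, (Iio ξ).Countable := fun ξ => by
    rw [← Cardinal.le_aleph0_iff_set_countable, ← Cardinal.lt_aleph_one_iff]
    simpa [ι] using Cardinal.mk_Iio_lt ξ (by simp [ι])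
  obtain ⟨e⟩ : Nonempty (ι ↪ S) := by
    rw [← Cardinal.le_def]
    simp [ι, Cardinal.aleph_one_le_iff]
  intro hdom
  refine not_forall_exists_le_of_forall_countable_Iio hIio (fun α ξ => φ α (e ξ))
    (fun α β h ξ => hφ h (e ξ)) fun H => ?_
  obtain ⟨α, hα⟩ := hdom (Function.extend e H 0)
  exact ⟨α, fun ξ => by simpa [e.injective.extend_apply] using hα (e ξ)⟩

/-- If the set `C_ω(X)` of ω-continuous real functions on a uniform space `X` is
`ω^ω`-dominated in `ℝ^X`, then `X` is ω-narrow: for every entourage `U` there is a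
countable set `C ⊆ X` with `X = ⋃_{c ∈ C} U[c]`. -/
theorem omegaNarrow_of_omegaContinuous_dominated
    {X : Type*} [UniformSpace X]
    (hdom : ∃ φ : (ℕ → ℕ) → (X → ℝ), Monotone φ ∧
      ∀ f : X → ℝ, OmegaContinuous f → ∃ α : ℕ → ℕ, f ≤ φ α) :
    ∀ U ∈ uniformity X, ∃ C : Set X, C.Countable ∧ ∀ x : X, ∃ c ∈ C, (c, x) ∈ U := by
  obtain ⟨φ, hφ, hφ_dom⟩ := hdom
  intro U hU
  obtain ⟨Y, _, p, hp, r, hr, hrU⟩ := exists_uniformContinuous_pseudoMetricSpace hU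
  let R : SetRel X X := {q | dist (p q.1) (p q.2) < r}
  have : R.IsRefl := ⟨fun x => by simpa [R] using hr⟩
  have : R.IsSymm := ⟨fun x x' h => by simpa [R, dist_comm] using h⟩
  obtain ⟨C, hC_sep, hC_cover⟩ := R.exists_isSeparated_isCover
  refine ⟨C, ?_, fun x => ?_⟩
  · by_contra hC
    have : Uncountable C := not_countable_iff.1 (mt Set.countable_coe_iff.1 hC)
    refine not_forall_exists_le_of_uncountable (fun α (c : C) => φ α c) (fun α β h c => hφ h c)
      fun H => ?_
    obtain ⟨f, hf, hfH⟩ := exists_omegaContinuous_eq_of_pairwise_le_dist hr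
      (y := fun c : C => p c)
      (fun c c' hne => not_lt.1 (hC_sep c.2 c'.2 (Subtype.coe_injective.ne hne))) (fun c => H c)
    obtain ⟨α, hα⟩ := hφ_dom (f ∘ p) (hf.comp_uniformContinuous hp)
    exact ⟨α, fun c => (hfH c).symm.le.trans (hα c)⟩
  · obtain ⟨c, hc, hxc⟩ := hC_cover (mem_univ x)
    exact ⟨c, hc, hrU c x (by simpa [R, dist_comm] using hxc)⟩
end

section
/- Assume ω₁ < 𝔟, i.e., every subset B ⊆ ω^ω of cardinality at most ℵ₁ is dominated by a countable set: there exists a countable C ⊆ ω^ω such that every f ∈ B satisfies f ≤ g for some g ∈ C. If X is a uniform space whose uniformity is ω-narrow and has a 𝔊-base, then the topological space X (with the topology induced by the uniformity) is weakly cosmic, that is, X contains no uncountable weakly separated subset. -/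
/-!
Choose for every point `x` of a weakly separated set `S` an index `α x` with `U (α x)[x] ⊆ O x`.
If `S` were uncountable, `ω₁ < 𝔟` would give an uncountable `T ⊆ S` on which `α` is bounded by a
single `g`, and ω-narrowness would give distinct `x, y ∈ T` that are `U g`-close in both directions.
Monotonicity of the base then puts `y ∈ O x` and `x ∈ O y`, contradicting weak separation.
-/

/-- A subset `S` of a topological space is weakly separated if every `x ∈ S` has an open
neighborhood `O x` such that for distinct `x, y ∈ S` either `x ∉ O y` or `y ∉ O x`. -/
def WeaklySeparated {X : Type*} [TopologicalSpace X] (S : Set X) : Prop :=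
  ∃ O : X → Set X, (∀ x ∈ S, IsOpen (O x) ∧ x ∈ O x) ∧
    ∀ x ∈ S, ∀ y ∈ S, x ≠ y → x ∉ O y ∨ y ∉ O x

/-- A topological space is weakly cosmic if it has no uncountable weakly separated subset. -/
def WeaklyCosmic (X : Type*) [TopologicalSpace X] : Prop :=
  ∀ S : Set X, WeaklySeparated S → S.Countable

open Cardinal Uniformity

theorem Set.exists_not_countable_sep_of_countable {ι α : Type*} {S : Set α}
    (hS : ¬ S.Countable) {C : Set ι} (hC : C.Countable) {p : ι → α → Prop}
    (hp : ∀ x ∈ S, ∃ i ∈ C, p i x) : ∃ i ∈ C, ¬ {x ∈ S | p i x}.Countable := by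
  by_contra! h
  refine hS ((hC.biUnion h).mono fun x hx => ?_)
  obtain ⟨i, hi, hpx⟩ := hp x hx
  exact Set.mem_biUnion hi ⟨hx, hpx⟩

theorem exists_not_countable_le_of_aleph_one_dominated {ι : Type*}
    (hb : ∀ B : Set (ℕ → ℕ), #B ≤ ℵ₁ → ∃ C : Set (ℕ → ℕ), C.Countable ∧ ∀ f ∈ B, ∃ g ∈ C, f ≤ g)
    {S : Set ι} (hS : ¬ S.Countable) (A : ι → ℕ → ℕ) :
    ∃ g, ¬ {x ∈ S | A x ≤ g}.Countable := by
  -- `hb` only dominates sets of size `≤ ℵ₁`, so shrink `S` to a subset of size exactly `ℵ₁`.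
  have hS₁ : ℵ₁ ≤ #S := aleph_one_le_iff.2 (not_le.1 (mt le_aleph0_iff_set_countable.1 hS))
  obtain ⟨S₁, hS₁S, hS₁card⟩ := le_mk_iff_exists_subset.1 hS₁
  have hS₁unc : ¬ S₁.Countable := by
    rw [← le_aleph0_iff_set_countable, hS₁card]
    exact aleph0_lt_aleph_one.not_ge
  have himage : #(A '' S₁) ≤ ℵ₁ := by
    simpa [hS₁card] using mk_image_le_lift (f := A) (s := S₁)
  obtain ⟨C, hC, hdom⟩ := hb (A '' S₁) himage
  obtain ⟨g, -, hg⟩ := Set.exists_not_countable_sep_of_countable hS₁unc hC (p := fun g x => A x ≤ g)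
    fun x hx => hdom (A x) (Set.mem_image_of_mem A hx)
  exact ⟨g, fun h => hg (h.mono fun _ hx => Set.mem_sep (hS₁S hx.1) hx.2)⟩

theorem exists_ne_mem_entourage_of_not_countable {X : Type*} [UniformSpace X]
    (hnarrow : ∀ U ∈ 𝓤 X, ∃ C : Set X, C.Countable ∧ ∀ x : X, ∃ c ∈ C, (c, x) ∈ U)
    {W : Set (X × X)} (hW : W ∈ 𝓤 X) {T : Set X} (hT : ¬ T.Countable) :
    ∃ x ∈ T, ∃ y ∈ T, x ≠ y ∧ (x, y) ∈ W ∧ (y, x) ∈ W := by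
  obtain ⟨V, hV, hVsymm, hVW⟩ := comp_symm_mem_uniformity_sets hW
  obtain ⟨C, hC, hcover⟩ := hnarrow V hV
  obtain ⟨c, -, hc⟩ := Set.exists_not_countable_sep_of_countable hT hC (p := fun c x => (c, x) ∈ V)
    fun x _ => hcover x
  have hnt : {x ∈ T | (c, x) ∈ V}.Nontrivial :=
    Set.not_subsingleton_iff.1 fun h => hc h.countable
  obtain ⟨x, ⟨hxT, hcx⟩, y, ⟨hyT, hcy⟩, hxy⟩ := hnt
  exact ⟨x, hxT, y, hyT, hxy, hVW ⟨c, hVsymm.symm _ _ hcx, hcy⟩,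
    hVW ⟨c, hVsymm.symm _ _ hcy, hcx⟩⟩

/-- Assume `ω₁ < 𝔟`. If the uniformity of a uniform space `X` is ω-narrow and has a
`𝔊`-base, then `X` is weakly cosmic. -/
theorem weaklyCosmic_of_omegaNarrow_gBase
    {X : Type*} [UniformSpace X]
    (hb : ∀ B : Set (ℕ → ℕ), Cardinal.mk ↥B ≤ Cardinal.aleph 1 →
      ∃ C : Set (ℕ → ℕ), C.Countable ∧ ∀ f ∈ B, ∃ g ∈ C, f ≤ g)
    (hnarrow : ∀ U ∈ uniformity X, ∃ C : Set X, C.Countable ∧ ∀ x : X, ∃ c ∈ C, (c, x) ∈ U)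
    (hG : ∃ U : (ℕ → ℕ) → Set (X × X), (∀ α, U α ∈ uniformity X) ∧
      (∀ V ∈ uniformity X, ∃ α, U α ⊆ V) ∧ ∀ α β : ℕ → ℕ, α ≤ β → U β ⊆ U α) :
    WeaklyCosmic X := by
  obtain ⟨U, hUmem, hUbase, hUmono⟩ := hG
  rintro S ⟨O, hO, hsep⟩
  have hball : ∀ x ∈ S, ∃ α, ∀ y, (x, y) ∈ U α → y ∈ O x := by
    intro x hx
    obtain ⟨V, hV, hVO⟩ := UniformSpace.mem_nhds_iff.1 ((hO x hx).1.mem_nhds (hO x hx).2)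
    obtain ⟨α, hα⟩ := hUbase V hV
    exact ⟨α, fun y hy => hVO (hα hy)⟩
  choose! α hα using hball
  by_contra hS
  obtain ⟨g, hT⟩ := exists_not_countable_le_of_aleph_one_dominated hb hS α
  obtain ⟨x, ⟨hxS, hxg⟩, y, ⟨hyS, hyg⟩, hxy, hxyU, hyxU⟩ :=
    exists_ne_mem_entourage_of_not_countable hnarrow (hUmem g) hT
  have hyOx : y ∈ O x := hα x hxS y (hUmono _ _ hxg hxyU)
  have hxOy : x ∈ O y := hα y hyS x (hUmono _ _ hyg hyxU)
  exact (hsep x hxS y hyS hxy).elim (· hxOy) (· hyOx)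
end

section
/- If the uniformity of a uniform space X has a 𝔊-base, then the product uniformity on the countable power X^ω = ∏_{n∈ω} X also has a 𝔊-base. -/
/-!
A basic entourage of the product `∏ₙ Xₙ` is cut out by finitely many coordinates `n ≤ N`,
each constrained by a member `U n (f n)` of the `𝔊`-base of `Xₙ`. Intersecting over `n ≤ N`
gives a base of the product uniformity indexed by `ℕ × (ℕ → ω^ω)`, antitone for the
coordinatewise order. Finally `α ↦ (α 0, (n, m) ↦ α (Nat.pair n m + 1))` maps `ω^ω`
monotonically and cofinally onto this index set, so the reindexed base is again a `𝔊`-base.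
-/

/-- A uniform space has a `𝔊`-base if there is a base `(U_α)_{α ∈ ω^ω}` of its uniformity
such that `U_β ⊆ U_α` whenever `α ≤ β` in `ω^ω`. -/
def HasGBase (X : Type*) [UniformSpace X] : Prop :=
  ∃ U : (ℕ → ℕ) → Set (X × X), (∀ α, U α ∈ uniformity X) ∧
    (∀ V ∈ uniformity X, ∃ α, U α ⊆ V) ∧ ∀ α β : ℕ → ℕ, α ≤ β → U β ⊆ U α

open Filter Set Uniformity

theorem hasGBase_iff_exists_hasAntitoneBasis {X : Type*} [UniformSpace X] :
    HasGBase X ↔ ∃ U : (ℕ → ℕ) → Set (X × X), (𝓤 X).HasAntitoneBasis U := by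
  constructor
  · rintro ⟨U, hU_mem, hU_basis, hU_anti⟩
    refine ⟨U, ⟨⟨fun V => ⟨fun hV => ?_, fun ⟨α, _, hα⟩ => mem_of_superset (hU_mem α) hα⟩⟩,
      fun α β hαβ => hU_anti α β hαβ⟩⟩
    obtain ⟨α, hα⟩ := hU_basis V hV
    exact ⟨α, trivial, hα⟩
  · rintro ⟨U, hU⟩
    exact ⟨U, hU.mem, fun _ hV => hU.mem_iff.1 hV, fun _ _ h => hU.antitone h⟩

theorem Filter.HasAntitoneBasis.iInf_nat {α ι : Type*} [Preorder ι] {l : ℕ → Filter α}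
    {s : ℕ → ι → Set α} (hl : ∀ n, (l n).HasAntitoneBasis (s n)) :
    (⨅ n, l n).HasAntitoneBasis fun p : ℕ × (ℕ → ι) => ⋂ n ≤ p.1, s n (p.2 n) := by
  refine ⟨(HasBasis.iInf' fun n => (hl n).toHasBasis).to_hasBasis ?_ ?_, ?_⟩
  · rintro ⟨I, f⟩ ⟨hI, -⟩
    obtain ⟨N, hN⟩ := hI.bddAbove
    exact ⟨(N, f), trivial, biInter_mono (fun n hn => hN hn) fun _ _ => Subset.rfl⟩
  · rintro ⟨N, f⟩ -
    exact ⟨(Iic N, f), ⟨finite_Iic N, fun _ _ => trivial⟩, Subset.rfl⟩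
  · rintro ⟨N, f⟩ ⟨N', f'⟩ ⟨hN, hf⟩
    exact biInter_mono (fun n hn => le_trans hn hN) fun n _ => (hl n).antitone (hf n)

def natFunSplit (α : ℕ → ℕ) : ℕ × (ℕ → ℕ → ℕ) :=
  (α 0, fun n m => α (Nat.pair n m + 1))

theorem monotone_natFunSplit : Monotone natFunSplit :=
  fun _ _ h => ⟨h 0, fun _ _ => h _⟩

theorem tendsto_natFunSplit_atTop : Tendsto natFunSplit atTop atTop := by
  refine tendsto_atTop_atTop.2 fun p => ?_
  let β : ℕ → ℕ := fun k => if k = 0 then p.1 else p.2 k.pred.unpair.1 k.pred.unpair.2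
  refine ⟨β, fun α hα => ⟨?_, fun n m => ?_⟩⟩
  · simpa [natFunSplit, β] using hα 0
  · simpa [natFunSplit, β] using hα (Nat.pair n m + 1)

theorem hasGBase_pi {X : ℕ → Type*} [∀ n, UniformSpace (X n)] (h : ∀ n, HasGBase (X n)) :
    HasGBase (∀ n, X n) := by
  simp only [hasGBase_iff_exists_hasAntitoneBasis] at h ⊢
  choose U hU using h
  have hpi := HasAntitoneBasis.iInf_nat fun n =>
    (hU n).comap fun p : (∀ n, X n) × (∀ n, X n) => (p.1 n, p.2 n)
  rw [← Pi.uniformity] at hpi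
  exact ⟨_, hpi.comp_mono monotone_natFunSplit tendsto_natFunSplit_atTop⟩

/-- If the uniformity of a uniform space `X` has a `𝔊`-base, then the product uniformity
on the countable power `X^ω` has a `𝔊`-base as well. -/
theorem hasGBase_pi_of_hasGBase {X : Type*} [UniformSpace X] (h : HasGBase X) :
    HasGBase (ℕ → X) :=
  hasGBase_pi fun _ => h
end

section
/- Let 𝔟 denote the least cardinality of a set B ⊆ ω^ω which is not dominated by any countable subset of ω^ω (i.e., for which there is no countable C ⊆ ω^ω such that every f ∈ B satisfies f ≤ g for some g ∈ C). Then there exists a monotone cofinal map from the poset (ω^ω, ≤) to the set of ordinals smaller than 𝔟 with their usual order; in other words, ω^ω ≽ 𝔟. -/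
/-! Enumerate a witness `B` for `𝔟` as `(F i)_{i < 𝔟}` and send `g ∈ ω^ω` to the least `i` such
that `F i` is not eventually dominated by `g`. Such an `i` exists because a set eventually dominated
by a single `g` is countably dominated (by the `g + k`); enlarging `g` can only shrink the set of
such `i`, so the map is monotone. It is cofinal because each initial segment `{F j | j < i}` has
fewer than `𝔟` elements, hence is countably dominated, hence eventually dominated by a single
diagonal function `g`, which the map then sends to an index `≥ i`. -/

/-- The cardinal `𝔟`: the least cardinality of a subset `B ⊆ ω^ω` which is not dominated
by any countable subset of `ω^ω`. -/
noncomputable def bCardinal : Cardinal :=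
  sInf {c : Cardinal | ∃ B : Set (ℕ → ℕ), Cardinal.mk ↥B = c ∧
    ¬ ∃ C : Set (ℕ → ℕ), C.Countable ∧ ∀ f ∈ B, ∃ g ∈ C, f ≤ g}

open Filter Set Cardinal

def CountablyDominated (B : Set (ℕ → ℕ)) : Prop :=
  ∃ C : Set (ℕ → ℕ), C.Countable ∧ ∀ f ∈ B, ∃ g ∈ C, f ≤ g

lemma exists_le_add_const_of_eventuallyLE {f g : ℕ → ℕ} (h : f ≤ᶠ[atTop] g) :
    ∃ k : ℕ, ∀ n, f n ≤ g n + k := by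
  obtain ⟨N, hN⟩ := eventually_atTop.1 h
  refine ⟨(Finset.range N).sup f, fun n => ?_⟩
  rcases lt_or_ge n N with hn | hn
  · exact (Finset.le_sup (Finset.mem_range.2 hn)).trans (Nat.le_add_left _ _)
  · exact (hN n hn).trans (Nat.le_add_right _ _)

lemma exists_forall_eventuallyLE_of_countable {C : Set (ℕ → ℕ)} (hC : C.Countable) :
    ∃ g : ℕ → ℕ, ∀ f ∈ C, f ≤ᶠ[atTop] g := by
  rcases C.eq_empty_or_nonempty with rfl | hne
  · exact ⟨0, by simp⟩
  obtain ⟨c, rfl⟩ := hC.exists_eq_range hne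
  refine ⟨fun n => (Finset.range (n + 1)).sup (c · n), ?_⟩
  rintro _ ⟨k, rfl⟩
  exact eventually_atTop.2 ⟨k, fun n hn =>
    Finset.le_sup (f := (c · n)) (Finset.mem_range.2 (Nat.lt_succ_of_le hn))⟩

theorem countablyDominated_iff_exists_eventuallyLE {B : Set (ℕ → ℕ)} :
    CountablyDominated B ↔ ∃ g : ℕ → ℕ, ∀ f ∈ B, f ≤ᶠ[atTop] g := by
  constructor
  · rintro ⟨C, hC, hBC⟩
    obtain ⟨g, hg⟩ := exists_forall_eventuallyLE_of_countable hC
    refine ⟨g, fun f hf => ?_⟩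
    obtain ⟨c, hc, hfc⟩ := hBC f hf
    exact EventuallyLE.trans (Eventually.of_forall hfc) (hg c hc)
  · rintro ⟨g, hg⟩
    refine ⟨range fun k n => g n + k, countable_range _, fun f hf => ?_⟩
    obtain ⟨k, hk⟩ := exists_le_add_const_of_eventuallyLE (hg f hf)
    exact ⟨_, ⟨k, rfl⟩, hk⟩

theorem not_countablyDominated_univ : ¬ CountablyDominated univ := by
  rw [countablyDominated_iff_exists_eventuallyLE]
  rintro ⟨g, hg⟩
  obtain ⟨n, hn⟩ := (hg (g + 1) (mem_univ _)).exists
  simp at hn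

theorem exists_mk_eq_bCardinal_not_countablyDominated :
    ∃ B : Set (ℕ → ℕ), #B = bCardinal ∧ ¬ CountablyDominated B :=
  csInf_mem (s := {c | ∃ B : Set (ℕ → ℕ), #B = c ∧ ¬ CountablyDominated B})
    ⟨_, univ, rfl, not_countablyDominated_univ⟩

theorem countablyDominated_of_mk_lt_bCardinal {B : Set (ℕ → ℕ)} (hB : #B < bCardinal) :
    CountablyDominated B := by
  by_contra h
  exact notMem_of_lt_csInf' hB ⟨B, rfl, h⟩

theorem exists_monotone_cofinal_of_antitone {P ι : Type*} [Preorder P] [LinearOrder ι]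
    [WellFoundedLT ι] {S : P → Set ι} (hS : Antitone S) (hne : ∀ p, (S p).Nonempty)
    (hcof : ∀ i, ∃ p, ∀ j ∈ S p, i ≤ j) :
    ∃ φ : P → ι, Monotone φ ∧ ∀ i, ∃ p, i ≤ φ p := by
  refine ⟨fun p => wellFounded_lt.min (S p) (hne p), fun p q hpq => ?_, fun i => ?_⟩
  · exact wellFounded_lt.min_le (hS hpq (wellFounded_lt.min_mem _ _))
  · obtain ⟨p, hp⟩ := hcof i
    exact ⟨p, hp _ (wellFounded_lt.min_mem _ _)⟩

theorem exists_monotone_cofinal_of_not_countablyDominated {ι : Type*} [LinearOrder ι]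
    [WellFoundedLT ι] (F : ι → ℕ → ℕ) (hF : ¬ CountablyDominated (range F))
    (hF_Iio : ∀ i, CountablyDominated (F '' Iio i)) :
    ∃ φ : (ℕ → ℕ) → ι, Monotone φ ∧ ∀ i, ∃ g, i ≤ φ g := by
  simp only [countablyDominated_iff_exists_eventuallyLE] at hF hF_Iio
  refine exists_monotone_cofinal_of_antitone (S := fun g => {i | ¬ F i ≤ᶠ[atTop] g})
    (fun g g' hg i hi h => hi (h.trans (Eventually.of_forall hg))) (fun g => ?_) (fun i => ?_)
  · by_contra h
    exact hF ⟨g, forall_mem_range.2 fun i => not_not.1 fun hi => h ⟨i, hi⟩⟩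
  · obtain ⟨g, hg⟩ := hF_Iio i
    exact ⟨g, fun j hj => not_lt.1 fun hji => hj (hg _ (mem_image_of_mem F hji))⟩

/-- There is a monotone cofinal map from the poset `ω^ω` (with the pointwise order) to
the set of ordinals smaller than `𝔟` with their usual order; that is, `ω^ω ≽ 𝔟`. -/
theorem exists_monotone_cofinal_to_b :
    ∃ φ : (ℕ → ℕ) → {o : Ordinal // o < bCardinal.ord},
      Monotone φ ∧ ∀ q : {o : Ordinal // o < bCardinal.ord}, ∃ p : ℕ → ℕ, q ≤ φ p := by
  obtain ⟨B, hB_card, hB⟩ := exists_mk_eq_bCardinal_not_countablyDominated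
  obtain ⟨e⟩ : Nonempty (bCardinal.ord.ToType ≃ B) :=
    Cardinal.eq.1 (by rw [mk_ord_toType, hB_card])
  have hF : range (fun i => (e i : ℕ → ℕ)) = B :=
    (e.surjective.range_comp Subtype.val).trans Subtype.range_coe
  obtain ⟨φ, hφ_mono, hφ_cof⟩ := exists_monotone_cofinal_of_not_countablyDominated
    (fun i => (e i : ℕ → ℕ)) (by rwa [hF]) fun i => countablyDominated_of_mk_lt_bCardinal <|
      mk_image_le.trans_lt (by simpa using mk_Iio_lt i)
  refine ⟨fun g => Ordinal.ToType.mk.symm (φ g), Ordinal.ToType.mk.symm.monotone.comp hφ_mono,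
    fun q => ?_⟩
  obtain ⟨g, hg⟩ := hφ_cof (Ordinal.ToType.mk q)
  exact ⟨g, Ordinal.ToType.mk.le_symm_apply.2 hg⟩
end

section
/- Let X be a uniform space and D ⊆ X a dense subset (with respect to the topology induced by the uniformity). Then there exists a monotone cofinal map from the poset 𝒰(X)^ω × ℕ^D (with coordinatewise order, where ℕ^D is ordered pointwise) to the poset ℰ(C_u(X)); in particular, if X has density κ, then 𝒰(X)^ω × ω^κ ≽ ℰ(C_u(X)). -/
/-- A set `E` of real functions on a uniform space is a member of `ℰ(C_u(X))` if all its
members are uniformly continuous, it is pointwise bounded, and it is equicontinuous. -/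
def PtwiseBddEquicont {X : Type*} [UniformSpace X] (E : Set (X → ℝ)) : Prop :=
  (∀ f ∈ E, UniformContinuous f) ∧
  (∀ x : X, ∃ M : ℝ, ∀ f ∈ E, |f x| ≤ M) ∧
  (∀ ε : ℝ, 0 < ε → ∃ U ∈ uniformity X, ∀ f ∈ E, ∀ p : X × X, p ∈ U → |f p.1 - f p.2| < ε)

/-!
A set `E ∈ ℰ(C_u(X))` is determined, up to enlargement, by entourages `Uₙ` on which every
`f ∈ E` oscillates by at most `1/(n+1)` together with integer bounds for `|f|` on `D`.
Conversely, the uniformly continuous functions obeying such data form an equicontinuous set,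
and it is pointwise bounded because every point of `X` is `U₀`-close to a point of the dense
set `D`. Sending the data to this set is the required monotone cofinal map.
-/

open Uniformity

section

variable {X : Type*} [UniformSpace X]

def boundedModulusSet {D : Set X} (U : ℕ → Set (X × X)) (φ : D → ℕ) : Set (X → ℝ) :=
  {f | UniformContinuous f ∧ (∀ d : D, |f d| ≤ φ d) ∧
    ∀ n, ∀ q ∈ U n, |f q.1 - f q.2| ≤ 1 / (n + 1)}

lemma Dense.exists_forall_abs_le {D : Set X} (hD : Dense D) {U : Set (X × X)} (hU : U ∈ 𝓤 X)
    {E : Set (X → ℝ)} {c : D → ℝ} {r : ℝ} (hbound : ∀ f ∈ E, ∀ d : D, |f d| ≤ c d)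
    (hclose : ∀ f ∈ E, ∀ q ∈ U, |f q.1 - f q.2| ≤ r) (x : X) :
    ∃ M, ∀ f ∈ E, |f x| ≤ M := by
  obtain ⟨d, hd, hxd⟩ := hD.inter_nhds_nonempty (UniformSpace.ball_mem_nhds x hU)
  refine ⟨c ⟨d, hd⟩ + r, fun f hf => ?_⟩
  calc |f x| ≤ |f d| + |f x - f d| := by simpa using abs_add_le (f d) (f x - f d)
    _ ≤ c ⟨d, hd⟩ + r := add_le_add (hbound f hf ⟨d, hd⟩) (hclose f hf (x, d) hxd)

lemma ptwiseBddEquicont_boundedModulusSet {D : Set X} (hD : Dense D) {U : ℕ → Set (X × X)}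
    (hU : ∀ n, U n ∈ 𝓤 X) (φ : D → ℕ) : PtwiseBddEquicont (boundedModulusSet U φ) := by
  refine ⟨fun f hf => hf.1, hD.exists_forall_abs_le (hU 0) (fun f hf => hf.2.1)
    (fun f hf => hf.2.2 0), fun ε hε => ?_⟩
  obtain ⟨n, hn⟩ := exists_nat_one_div_lt hε
  exact ⟨U n, hU n, fun f hf q hq => (hf.2.2 n q hq).trans_lt hn⟩

lemma boundedModulusSet_mono {D : Set X} {U V : ℕ → Set (X × X)} {φ ψ : D → ℕ}
    (hUV : ∀ n, V n ⊆ U n) (hφψ : ∀ d, φ d ≤ ψ d) :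
    boundedModulusSet U φ ⊆ boundedModulusSet V ψ :=
  fun _ ⟨hf, hfD, hfU⟩ => ⟨hf, fun d => (hfD d).trans (mod_cast hφψ d),
    fun n q hq => hfU n q (hUV n hq)⟩

lemma PtwiseBddEquicont.exists_subset_boundedModulusSet {E : Set (X → ℝ)}
    (hE : PtwiseBddEquicont E) (D : Set X) :
    ∃ U : ℕ → Set (X × X), (∀ n, U n ∈ 𝓤 X) ∧ ∃ φ : D → ℕ, E ⊆ boundedModulusSet U φ := by
  obtain ⟨hEuc, hEbdd, hEequi⟩ := hE
  choose U hU hUE using fun n : ℕ => hEequi (1 / (n + 1)) Nat.one_div_pos_of_nat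
  choose M hM using hEbdd
  exact ⟨U, hU, fun d => ⌈M d⌉₊, fun f hf => ⟨hEuc f hf,
    fun d => (hM d f hf).trans (Nat.le_ceil _), fun n q hq => (hUE n f hf q hq).le⟩⟩

end

/-- For a uniform space `X` with dense subset `D`, there is a monotone cofinal map from
the poset `𝒰(X)^ω × ℕ^D` (entourages ordered by reverse inclusion, `ℕ^D` pointwise) to
the poset `ℰ(C_u(X))` of pointwise bounded equicontinuous subsets of `C_u(X)`, ordered
by inclusion. -/
theorem exists_monotone_cofinal_to_equicont
    {X : Type*} [UniformSpace X] (D : Set X) (hD : Dense D) :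
    ∃ Φ : (ℕ → {U : Set (X × X) // U ∈ uniformity X}) × (D → ℕ) → Set (X → ℝ),
      (∀ p, PtwiseBddEquicont (Φ p)) ∧
      (∀ p q : (ℕ → {U : Set (X × X) // U ∈ uniformity X}) × (D → ℕ),
        (∀ n, (q.1 n : Set (X × X)) ⊆ (p.1 n : Set (X × X))) → (∀ d, p.2 d ≤ q.2 d) →
        Φ p ⊆ Φ q) ∧
      ∀ E : Set (X → ℝ), PtwiseBddEquicont E → ∃ p, E ⊆ Φ p := by
  refine ⟨fun p => boundedModulusSet (fun n => p.1 n) p.2,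
    fun p => ptwiseBddEquicont_boundedModulusSet hD (fun n => (p.1 n).2) p.2,
    fun p q hU hφ => boundedModulusSet_mono hU hφ, fun E hE => ?_⟩
  obtain ⟨U, hU, φ, hEU⟩ := hE.exists_subset_boundedModulusSet D
  exact ⟨(fun n => ⟨U n, hU n⟩, φ), hEU⟩
end

section
/- For every uniform space X there exists a monotone cofinal map from the poset ℰ(C_u(X)) to the poset 𝒰(X)^ω × C_u(X) (with coordinatewise order, where C_u(X) is ordered pointwise); that is, ℰ(C_u(X)) ≽ 𝒰(X)^ω × C_u(X). -/
open Filter Set Topology Uniformity SetRel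

/-!
The reduction sends `E` to the entourages `{(x, y) | ∀ f ∈ E, |f x - f y| ≤ 1 / (n + 1)}` and to
the pointwise supremum of `E ∪ {0}`; equicontinuity and pointwise boundedness make these an
entourage and a uniformly continuous function, and both depend monotonically on `E`.
For cofinality, given entourages `V n` and `g ∈ C_u(X)`, metrize the countably generated
uniformity spanned by a chain of entourages below `V n`: this gives a uniformly continuous
pseudometric `d n` whose small balls lie in `V n`. The truncated distances
`min (c n * d n (·, y)) (2 / (n + 1))`, with `c n` large, separate every pair outside `V n` by
`2 / (n + 1)`, and as these bounds tend to `0`, all of them together with `g` form a pointwise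
bounded equicontinuous family.
-/

universe u

section CountablyGenerated

theorem UniformSpace.exists_le_isCountablyGenerated_of_mem {X : Type*} [u₀ : UniformSpace X]
    {V : SetRel X X} (hV : V ∈ 𝓤 X) :
    ∃ u : UniformSpace X, u₀ ≤ u ∧ (𝓤[u]).IsCountablyGenerated ∧ V ∈ 𝓤[u] := by
  choose! t ht hsymm hcomp using fun s (hs : s ∈ 𝓤 X) => comp_symm_mem_uniformity_sets hs
  set W : ℕ → SetRel X X := fun n => t^[n] V
  have hW_succ n : W (n + 1) = t (W n) := Function.iterate_succ_apply' t n V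
  have hW_mem n : W n ∈ 𝓤 X := by
    induction n with
    | zero => exact hV
    | succ n ih => rw [hW_succ]; exact ht _ ih
  have hW_comp n : W (n + 1) ○ W (n + 1) ⊆ W n := hW_succ n ▸ hcomp _ (hW_mem n)
  have hW_anti : Antitone W := antitone_nat_of_succ_le fun n =>
    (subset_comp_self_of_mem_uniformity (hW_mem _)).trans (hW_comp n)
  have hB := HasAntitoneBasis.iInf_principal hW_anti
  let core : UniformSpace.Core X := .mk' (⨅ n, 𝓟 (W n))
    (fun _ hr x => let ⟨n, hn⟩ := hB.mem_iff.1 hr; hn (refl_mem_uniformity (hW_mem n)))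
    (fun _ hr => by
      obtain ⟨n, hn⟩ := hB.mem_iff.1 hr
      refine mem_of_superset (hB.mem (n + 1)) fun p hp => hn (hW_anti n.le_succ ?_)
      have : (W (n + 1)).IsSymm := hW_succ n ▸ hsymm _ (hW_mem n)
      exact SetRel.symm _ hp)
    (fun _ hr => let ⟨n, hn⟩ := hB.mem_iff.1 hr; ⟨W (n + 1), hB.mem _, (hW_comp n).trans hn⟩)
  exact ⟨.ofCore core, le_iInf fun n => le_principal_iff.2 (hW_mem n), hB.isCountablyGenerated,
    hB.mem 0⟩

theorem exists_uniformContinuous_pseudoMetricSpace_of_mem {X : Type u} [UniformSpace X]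
    {V : SetRel X X} (hV : V ∈ 𝓤 X) :
    ∃ (Y : Type u) (_ : PseudoMetricSpace Y) (φ : X → Y), UniformContinuous φ ∧
      ∃ ε > 0, ∀ x y, dist (φ x) (φ y) < ε → (x, y) ∈ V := by
  obtain ⟨u, hle, hu, hVu⟩ := UniformSpace.exists_le_isCountablyGenerated_of_mem hV
  obtain ⟨I, rfl⟩ := @UniformSpace.metrizable_uniformity X u hu
  obtain ⟨ε, hε, hεV⟩ := (@Metric.mem_uniformity_dist X I V).1 hVu
  exact ⟨X, I, id, le_iff_uniformContinuous_id.1 hle, ε, hε, fun x y h => hεV h⟩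

end CountablyGenerated

section SupFun

variable {α : Type*} {E F : Set (α → ℝ)} {x y : α}

/-- The `0` makes `supFun` monotone in `E`: otherwise the junk value `sSup ∅ = 0` could exceed
the supremum of a nonempty family of negative functions. -/
noncomputable def supFun (E : Set (α → ℝ)) (x : α) : ℝ :=
  sSup (insert 0 ((fun f => f x) '' E))

theorem le_supFun (hE : BddAbove ((fun f => f x) '' E)) {f : α → ℝ} (hf : f ∈ E) :
    f x ≤ supFun E x :=
  le_csSup (hE.insert 0) (mem_insert_of_mem _ (mem_image_of_mem _ hf))

theorem supFun_nonneg (hE : BddAbove ((fun f => f x) '' E)) : 0 ≤ supFun E x :=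
  le_csSup (hE.insert 0) (mem_insert _ _)

theorem supFun_mono (hF : BddAbove ((fun f => f x) '' F)) (h : E ⊆ F) :
    supFun E x ≤ supFun F x :=
  csSup_le_csSup (hF.insert 0) (insert_nonempty _ _) (insert_subset_insert (image_mono h))

theorem supFun_le_supFun_add {ε : ℝ} (hE : BddAbove ((fun f => f y) '' E)) (hε : 0 ≤ ε)
    (h : ∀ f ∈ E, f x ≤ f y + ε) : supFun E x ≤ supFun E y + ε := by
  refine csSup_le (insert_nonempty _ _) (forall_mem_insert.2 ⟨?_, forall_mem_image.2 ?_⟩)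
  · linarith [supFun_nonneg hE]
  · exact fun f hf => (h f hf).trans (by linarith [le_supFun hE hf])

end SupFun

section PtwiseBddEquicont

variable {X : Type*} [UniformSpace X] {E F : Set (X → ℝ)}

theorem ptwiseBddEquicont_iff : PtwiseBddEquicont E ↔ (∀ f ∈ E, UniformContinuous f) ∧
    (∀ x, ∃ M, ∀ f ∈ E, |f x| ≤ M) ∧
    ∀ ε > 0, ∀ᶠ p in 𝓤 X, ∀ f ∈ E, |f p.1 - f p.2| < ε := by
  simp only [PtwiseBddEquicont, eventually_iff_exists_mem]
  refine and_congr_right' <| and_congr_right' <| forall₂_congr fun _ _ =>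
    exists_congr fun _ => and_congr_right' ?_
  exact ⟨fun h p hp f hf => h f hf p hp, fun h f hf p hp => h p hp f hf⟩

theorem PtwiseBddEquicont.eventually (hE : PtwiseBddEquicont E) {ε : ℝ} (hε : 0 < ε) :
    ∀ᶠ p in 𝓤 X, ∀ f ∈ E, |f p.1 - f p.2| < ε :=
  (ptwiseBddEquicont_iff.1 hE).2.2 ε hε

theorem PtwiseBddEquicont.bddAbove_image (hE : PtwiseBddEquicont E) (x : X) :
    BddAbove ((fun f => f x) '' E) :=
  let ⟨M, hM⟩ := hE.2.1 x
  ⟨M, forall_mem_image.2 fun f hf => (le_abs_self _).trans (hM f hf)⟩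

theorem PtwiseBddEquicont.uniformContinuous_supFun (hE : PtwiseBddEquicont E) :
    UniformContinuous (supFun E) := by
  refine Metric.uniformity_basis_dist.tendsto_right_iff.2 fun ε hε => ?_
  filter_upwards [hE.eventually (half_pos hε)] with p hp
  have h₁ := supFun_le_supFun_add (x := p.1) (hE.bddAbove_image p.2) (half_pos hε).le
    fun f hf => by linarith [(abs_sub_lt_iff.1 (hp f hf)).1]
  have h₂ := supFun_le_supFun_add (x := p.2) (hE.bddAbove_image p.1) (half_pos hε).le
    fun f hf => by linarith [(abs_sub_lt_iff.1 (hp f hf)).2]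
  rw [Real.dist_eq, abs_sub_lt_iff]
  constructor <;> linarith

theorem PtwiseBddEquicont.insert (hE : PtwiseBddEquicont E) {g : X → ℝ}
    (hg : UniformContinuous g) : PtwiseBddEquicont (insert g E) := by
  obtain ⟨hUC, hbdd, heq⟩ := ptwiseBddEquicont_iff.1 hE
  refine ptwiseBddEquicont_iff.2 ⟨forall_mem_insert.2 ⟨hg, hUC⟩, fun x => ?_, fun ε hε => ?_⟩
  · obtain ⟨M, hM⟩ := hbdd x
    exact ⟨max |g x| M, forall_mem_insert.2
      ⟨le_max_left _ _, fun f hf => (hM f hf).trans (le_max_right _ _)⟩⟩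
  · filter_upwards [heq ε hε, hg (Metric.dist_mem_uniformity hε)] with p hp hgp
    exact forall_mem_insert.2 ⟨hgp, hp⟩

theorem ptwiseBddEquicont_range {ι : Type*} {F : ι → X → ℝ} (hF : UniformEquicontinuous F)
    (hbdd : ∀ x, ∃ M, ∀ i, |F i x| ≤ M) : PtwiseBddEquicont (range F) := by
  refine ptwiseBddEquicont_iff.2 ⟨forall_mem_range.2 hF.uniformContinuous, fun x => ?_,
    fun ε hε => ?_⟩
  · obtain ⟨M, hM⟩ := hbdd x
    exact ⟨M, forall_mem_range.2 hM⟩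
  · filter_upwards [Metric.uniformEquicontinuous_iff_right.1 hF ε hε] with p hp
    exact forall_mem_range.2 hp

/-- Equicontinuity of the union reduces to the finitely many `E n` whose bound `b n` is not yet
below `ε / 2`. -/
theorem ptwiseBddEquicont_iUnion {E : ℕ → Set (X → ℝ)} (hE : ∀ n, PtwiseBddEquicont (E n))
    {b : ℕ → ℝ} (hb : Tendsto b atTop (𝓝 0)) (hEb : ∀ n, ∀ f ∈ E n, ∀ x, |f x| ≤ b n) :
    PtwiseBddEquicont (⋃ n, E n) := by
  refine ptwiseBddEquicont_iff.2 ⟨fun f hf => ?_, fun x => ?_, fun ε hε => ?_⟩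
  · obtain ⟨n, hf⟩ := mem_iUnion.1 hf
    exact (hE n).1 f hf
  · obtain ⟨M, hM⟩ := hb.bddAbove_range
    exact ⟨M, fun f hf => let ⟨n, hf⟩ := mem_iUnion.1 hf; (hEb n f hf x).trans (hM ⟨n, rfl⟩)⟩
  · obtain ⟨N, hN⟩ := eventually_atTop.1 (hb.eventually (gt_mem_nhds (half_pos hε)))
    filter_upwards [(eventually_all_finite (finite_lt_nat N)).2 fun n _ => (hE n).eventually hε]
      with p hp f hf
    obtain ⟨n, hf⟩ := mem_iUnion.1 hf
    rcases lt_or_ge n N with hn | hn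
    · exact hp n hn f hf
    · calc |f p.1 - f p.2| ≤ |f p.1| + |f p.2| := abs_sub _ _
        _ ≤ b n + b n := add_le_add (hEb n f hf _) (hEb n f hf _)
        _ < ε := by linarith [hN n hn]

end PtwiseBddEquicont

section EquiEntourage

variable {X : Type*}

def equiEntourage (E : Set (X → ℝ)) (n : ℕ) : SetRel X X :=
  {p | ∀ f ∈ E, |f p.1 - f p.2| ≤ 1 / (n + 1)}

theorem equiEntourage_anti {E F : Set (X → ℝ)} (h : E ⊆ F) (n : ℕ) :
    equiEntourage F n ⊆ equiEntourage E n :=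
  fun _ hp f hf => hp f (h hf)

end EquiEntourage

section Cofinal

variable {X : Type u} [UniformSpace X]

theorem exists_ptwiseBddEquicont_separating {V : SetRel X X} (hV : V ∈ 𝓤 X) {b : ℝ}
    (hb : 0 < b) : ∃ E : Set (X → ℝ), PtwiseBddEquicont E ∧ (∀ f ∈ E, ∀ x, |f x| ≤ b) ∧
      ∀ x y, (x, y) ∉ V → ∃ f ∈ E, b ≤ |f x - f y| := by
  obtain ⟨Y, _, φ, hφ, ε, hε, hεV⟩ := exists_uniformContinuous_pseudoMetricSpace_of_mem hV
  set F : X → Y → ℝ := fun y z => min (b / ε * dist z (φ y)) b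
  have hF_nonneg y z : 0 ≤ F y z := le_min (by positivity) hb.le
  have hF_abs y z : |F y z| ≤ b := (abs_of_nonneg (hF_nonneg y z)).trans_le (min_le_right _ _)
  have hF_lip y : LipschitzWith ‖b / ε‖₊ (F y) := by
    simpa using ((lipschitzWith_smul (b / ε)).comp (LipschitzWith.dist_left (φ y))).min_const b
  have hUE : UniformEquicontinuous fun y => F y ∘ φ := by
    have := LipschitzWith.uniformEquicontinuous F _ hF_lip
    rw [uniformEquicontinuous_iff_uniformContinuous] at this ⊢
    exact this.comp hφ
  refine ⟨range fun y => F y ∘ φ, ptwiseBddEquicont_range hUE fun x => ⟨b, fun y => hF_abs y _⟩,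
    forall_mem_range.2 fun y x => hF_abs y _, fun x y hxy => ⟨F y ∘ φ, mem_range_self y, ?_⟩⟩
  have hFx : F y (φ x) = b := by
    refine min_eq_right ?_
    rw [div_mul_eq_mul_div, le_div_iff₀ hε]
    exact mul_le_mul_of_nonneg_left (not_lt.1 fun h => hxy (hεV x y h)) hb.le
  have hFy : F y (φ y) = 0 := by simp [F, hb.le]
  simp [hFx, hFy, abs_of_pos hb]

theorem PtwiseBddEquicont.equiEntourage_mem {E : Set (X → ℝ)} (hE : PtwiseBddEquicont E)
    (n : ℕ) : equiEntourage E n ∈ 𝓤 X := by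
  filter_upwards [hE.eventually (by positivity : (0 : ℝ) < 1 / (n + 1))] with p hp f hf
  exact (hp f hf).le

theorem exists_ptwiseBddEquicont_equiEntourage_subset {V : ℕ → SetRel X X}
    (hV : ∀ n, V n ∈ 𝓤 X) {g : X → ℝ} (hg : UniformContinuous g) :
    ∃ E, PtwiseBddEquicont E ∧ g ∈ E ∧ ∀ n, equiEntourage E n ⊆ V n := by
  choose E hE hEb hEV using fun n : ℕ =>
    exists_ptwiseBddEquicont_separating (hV n) (b := 2 / (n + 1)) (by positivity)
  have hb : Tendsto (fun n : ℕ => 2 / ((n : ℝ) + 1)) atTop (𝓝 0) := by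
    simpa [div_eq_mul_inv] using tendsto_one_div_add_atTop_nhds_zero_nat.const_mul (2 : ℝ)
  refine ⟨insert g (⋃ n, E n), (ptwiseBddEquicont_iUnion hE hb hEb).insert hg, mem_insert _ _,
    fun n p hp => not_not.1 fun hpV => ?_⟩
  obtain ⟨f, hf, hfp⟩ := hEV n p.1 p.2 hpV
  have h21 := hfp.trans (hp f (mem_insert_of_mem _ (mem_iUnion_of_mem n hf)))
  rw [div_le_div_iff_of_pos_right (by positivity)] at h21
  norm_num at h21

end Cofinal

/-- For every uniform space `X` there is a monotone cofinal map from the poset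
`ℰ(C_u(X))` (pointwise bounded equicontinuous subsets of `C_u(X)`, ordered by inclusion)
to the poset `𝒰(X)^ω × C_u(X)` (entourages ordered by reverse inclusion, `C_u(X)`
ordered pointwise); that is, `ℰ(C_u(X)) ≽ 𝒰(X)^ω × C_u(X)`. -/
theorem equicont_reduces_to_unif_pow_times_Cu {X : Type*} [UniformSpace X] :
    ∃ Ψ : {E : Set (X → ℝ) // PtwiseBddEquicont E} →
        (ℕ → {U : Set (X × X) // U ∈ uniformity X}) × {f : X → ℝ // UniformContinuous f},
      (∀ E F : {E : Set (X → ℝ) // PtwiseBddEquicont E}, E.1 ⊆ F.1 →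
        (∀ n, ((Ψ F).1 n : Set (X × X)) ⊆ ((Ψ E).1 n : Set (X × X))) ∧
        ∀ x : X, ((Ψ E).2 : X → ℝ) x ≤ ((Ψ F).2 : X → ℝ) x) ∧
      ∀ (V : ℕ → {U : Set (X × X) // U ∈ uniformity X})
        (g : {f : X → ℝ // UniformContinuous f}),
        ∃ E : {E : Set (X → ℝ) // PtwiseBddEquicont E},
          (∀ n, ((Ψ E).1 n : Set (X × X)) ⊆ (V n : Set (X × X))) ∧
          ∀ x : X, (g : X → ℝ) x ≤ ((Ψ E).2 : X → ℝ) x := by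
  refine ⟨fun E => (fun n => ⟨equiEntourage E.1 n, E.2.equiEntourage_mem n⟩,
    ⟨supFun E.1, E.2.uniformContinuous_supFun⟩), fun E F h => ?_, fun V g => ?_⟩
  · exact ⟨equiEntourage_anti h, fun x => supFun_mono (F.2.bddAbove_image x) h⟩
  · obtain ⟨E, hE, hgE, hEV⟩ :=
      exists_ptwiseBddEquicont_equiEntourage_subset (fun n => (V n).2) g.2
    exact ⟨⟨E, hE⟩, hEV, fun x => le_supFun (hE.bddAbove_image x) hgE⟩
end

section
/- For every uniform space X there exists a monotone cofinal map from the poset 𝒰(X)^ω × C_u(X) (with coordinatewise order, where C_u(X) is ordered pointwise) to the poset ℰ(C_u(X)); that is, 𝒰(X)^ω × C_u(X) ≽ ℰ(C_u(X)). -/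
/-!
A pair `(U, g)` is sent to the set of functions `f` with `|f| ≤ g` whose oscillation on `U n`
is at most `1 / (n + 1)`; this set is equicontinuous because the `U n` are entourages, and it
grows as the `U n` shrink and `g` grows. Conversely, a pointwise bounded equicontinuous `E` lies
in the set for `U n` an entourage witnessing equicontinuity at `ε = 1 / (n + 1)` and
`g = ⨆ f ∈ E, |f|`, which is uniformly continuous since the `|f|`, `f ∈ E`, are uniformly
equicontinuous.
-/

open Filter Set Uniformity

def oscBoundedSet {X : Type*} (U : ℕ → Set (X × X)) (g : X → ℝ) : Set (X → ℝ) :=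
  {f | (∀ x, |f x| ≤ g x) ∧ ∀ n : ℕ, ∀ p ∈ U n, |f p.1 - f p.2| ≤ 1 / (n + 1)}

lemma oscBoundedSet_mono {X : Type*} {U V : ℕ → Set (X × X)} {g h : X → ℝ}
    (hUV : ∀ n, V n ⊆ U n) (hgh : ∀ x, g x ≤ h x) : oscBoundedSet U g ⊆ oscBoundedSet V h :=
  fun _ hf => ⟨fun x => (hf.1 x).trans (hgh x), fun n p hp => hf.2 n p (hUV n hp)⟩

section

variable {X : Type*} [UniformSpace X]

lemma uniformContinuous_of_forall_abs_sub_lt {f : X → ℝ}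
    (hf : ∀ ε > 0, ∃ U ∈ 𝓤 X, ∀ p ∈ U, |f p.1 - f p.2| < ε) : UniformContinuous f := by
  rw [UniformContinuous, Metric.uniformity_basis_dist.tendsto_right_iff]
  intro ε hε
  obtain ⟨U, hU, hfU⟩ := hf ε hε
  exact mem_of_superset hU fun p hp => by simpa [Real.dist_eq] using hfU p hp

lemma PtwiseBddEquicont.uniformEquicontinuous_abs {E : Set (X → ℝ)}
    (hE : PtwiseBddEquicont E) : UniformEquicontinuous fun (f : E) x => |(f : X → ℝ) x| := by
  rw [Metric.uniformEquicontinuous_iff_right]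
  intro ε hε
  obtain ⟨U, hU, hEU⟩ := hE.2.2 ε hε
  exact mem_of_superset hU fun p hp f =>
    (abs_abs_sub_abs_le_abs_sub _ _).trans_lt (hEU f f.2 p hp)

lemma UniformEquicontinuous.uniformContinuous_ciSup {ι : Type*} {F : ι → X → ℝ}
    (hF : UniformEquicontinuous F) (hbdd : ∀ x, BddAbove (range fun i => F i x)) :
    UniformContinuous fun x => ⨆ i, F i x := by
  rcases isEmpty_or_nonempty ι with hι | hι
  · simpa only [Real.iSup_of_isEmpty] using uniformContinuous_const
  have iSup_le_iSup_add {x y : X} {ε : ℝ} (h : ∀ i, dist (F i x) (F i y) ≤ ε) :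
      ⨆ i, F i x ≤ (⨆ i, F i y) + ε :=
    ciSup_le fun i => by
      have hi := le_ciSup (hbdd y) i
      have hxy := (abs_sub_le_iff.1 ((Real.dist_eq _ _).symm.trans_le (h i))).1
      linarith
  rw [Metric.uniformEquicontinuous_iff_right] at hF
  rw [UniformContinuous, Metric.uniformity_basis_dist_le.tendsto_right_iff]
  intro ε hε
  filter_upwards [hF ε hε] with p hp
  rw [Real.dist_eq, abs_sub_le_iff]
  have hle := iSup_le_iSup_add fun i => (hp i).le
  have hge := iSup_le_iSup_add fun i => (dist_comm (F i p.2) (F i p.1)).trans_lt (hp i) |>.le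
  constructor <;> linarith

lemma ptwiseBddEquicont_oscBoundedSet {U : ℕ → Set (X × X)} (hU : ∀ n, U n ∈ 𝓤 X)
    (g : X → ℝ) : PtwiseBddEquicont (oscBoundedSet U g) := by
  have equicont : ∀ ε : ℝ, 0 < ε → ∃ V ∈ 𝓤 X, ∀ f ∈ oscBoundedSet U g, ∀ p ∈ V,
      |f p.1 - f p.2| < ε := by
    intro ε hε
    obtain ⟨n, hn⟩ := exists_nat_one_div_lt hε
    exact ⟨U n, hU n, fun f hf p hp => (hf.2 n p hp).trans_lt hn⟩
  refine ⟨fun f hf => ?_, fun x => ⟨g x, fun f hf => hf.1 x⟩, equicont⟩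
  exact uniformContinuous_of_forall_abs_sub_lt fun ε hε =>
    (equicont ε hε).imp fun _ ⟨hV, hfV⟩ => ⟨hV, hfV f hf⟩

lemma PtwiseBddEquicont.exists_subset_oscBoundedSet {E : Set (X → ℝ)}
    (hE : PtwiseBddEquicont E) : ∃ U : ℕ → Set (X × X), (∀ n, U n ∈ 𝓤 X) ∧
      ∃ g : X → ℝ, UniformContinuous g ∧ E ⊆ oscBoundedSet U g := by
  choose U hU hEU using fun n : ℕ => hE.2.2 (1 / (n + 1)) (by positivity)
  have hbdd (x : X) : BddAbove (range fun f : E => |(f : X → ℝ) x|) := by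
    obtain ⟨M, hM⟩ := hE.2.1 x
    exact ⟨M, by rintro _ ⟨f, rfl⟩; exact hM f f.2⟩
  refine ⟨U, hU, _, hE.uniformEquicontinuous_abs.uniformContinuous_ciSup hbdd,
    fun f hf => ⟨fun x => le_ciSup (hbdd x) ⟨f, hf⟩, fun n p hp => (hEU n f hf p hp).le⟩⟩

end

/-- For every uniform space `X` there is a monotone cofinal map from the poset
`𝒰(X)^ω × C_u(X)` (entourages ordered by reverse inclusion, `C_u(X)` ordered pointwise)
to the poset `ℰ(C_u(X))` of pointwise bounded equicontinuous subsets of `C_u(X)`,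
ordered by inclusion; that is, `𝒰(X)^ω × C_u(X) ≽ ℰ(C_u(X))`. -/
theorem unif_pow_times_Cu_reduces_to_equicont {X : Type*} [UniformSpace X] :
    ∃ Φ : (ℕ → {U : Set (X × X) // U ∈ uniformity X}) ×
        {f : X → ℝ // UniformContinuous f} → Set (X → ℝ),
      (∀ p, PtwiseBddEquicont (Φ p)) ∧
      (∀ p q : (ℕ → {U : Set (X × X) // U ∈ uniformity X}) ×
          {f : X → ℝ // UniformContinuous f},
        (∀ n, (q.1 n : Set (X × X)) ⊆ (p.1 n : Set (X × X))) →
        (∀ x : X, (p.2 : X → ℝ) x ≤ (q.2 : X → ℝ) x) → Φ p ⊆ Φ q) ∧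
      ∀ E : Set (X → ℝ), PtwiseBddEquicont E → ∃ p, E ⊆ Φ p := by
  refine ⟨fun p => oscBoundedSet (fun n => p.1 n) p.2,
    fun p => ptwiseBddEquicont_oscBoundedSet (fun n => (p.1 n).2) _,
    fun p q hU hg => oscBoundedSet_mono hU hg, fun E hE => ?_⟩
  obtain ⟨U, hU, g, hg, hEU⟩ := hE.exists_subset_oscBoundedSet
  exact ⟨(fun n => ⟨U n, hU n⟩, ⟨g, hg⟩), hEU⟩
end

section
/- Let X be a uniform space whose uniformity has a 𝔊-base (U_α)_{α∈ω^ω}, and for α ∈ ω^ω and k ∈ ω put U_{α|k} = ⋂ {U_β : β ∈ ω^ω, β(i) = α(i) for all i < k}. Let (F_n)_{n∈ω} and (E_n)_{n∈ω} be sequences of finite subsets of X such that for every entourage U of X there exists k ∈ ω with (F_n × E_n) ∩ U ≠ ∅ for every n ≥ k. Then for every α ∈ ω^ω there exists k ∈ ω such that (F_n × E_n) ∩ U_{α|k} ≠ ∅ for every n ≥ k. -/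
/-! If the conclusion failed, for every `k` some `n_k ≥ k` would have each of the finitely many
pairs `p ∈ F_{n_k} × E_{n_k}` outside some `U_β` with `β|k = α|k`. Countably many finite
families of such `β` have a common upper bound `γ`: at coordinate `i` only the finitely many
`β` attached to `k ≤ i` can exceed `α i`. Then `U_γ` is an entourage contained in every one
of those `U_β`, so no `F_{n_k} × E_{n_k}` meets it, contradicting the hypothesis on `(F_n, E_n)`. -/

theorem exists_upper_bound_of_finite_of_eq_below (α : ℕ → ℕ) (S : ℕ → Set (ℕ → ℕ))
    (hfin : ∀ k, (S k).Finite) (hagree : ∀ k, ∀ β ∈ S k, ∀ i < k, β i = α i) :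
    ∃ γ : ℕ → ℕ, ∀ k, ∀ β ∈ S k, β ≤ γ := by
  have hbdd : ∀ i, BddAbove (⋃ k ∈ Set.Iic i, (fun β : ℕ → ℕ => β i) '' S k) := fun i =>
    ((Set.finite_Iic i).biUnion fun k _ => (hfin k).image _).bddAbove
  choose c hc using hbdd
  refine ⟨fun i => max (α i) (c i), fun k β hβ i => ?_⟩
  rcases lt_or_ge i k with hik | hki
  · exact (hagree k β hβ i hik).le.trans (le_max_left _ _)
  · exact (hc i (Set.mem_biUnion hki ⟨β, hβ, rfl⟩)).trans (le_max_right _ _)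

theorem exists_k_meets_restricted_entourage_general
    {X : Type*} [UniformSpace X]
    (U : (ℕ → ℕ) → Set (X × X))
    (hmem : ∀ α, U α ∈ uniformity X)
    (hmono : ∀ α β : ℕ → ℕ, α ≤ β → U β ⊆ U α)
    (F E : ℕ → Finset X)
    (hFE : ∀ V ∈ uniformity X, ∃ k : ℕ, ∀ n ≥ k, ∃ x ∈ F n, ∃ y ∈ E n, (x, y) ∈ V)
    (α : ℕ → ℕ) :
    ∃ k : ℕ, ∀ n ≥ k, ∃ x ∈ F n, ∃ y ∈ E n,
      (x, y) ∈ ⋂ β ∈ {β : ℕ → ℕ | ∀ i < k, β i = α i}, U β := by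
  by_contra! h
  choose n hn hmiss using h
  have hescape : ∀ k, ∀ p ∈ F (n k) ×ˢ E (n k), ∃ β : ℕ → ℕ, (∀ i < k, β i = α i) ∧ p ∉ U β :=
    fun k p hp => by
      obtain ⟨hx, hy⟩ := Finset.mem_product.mp hp
      simpa using hmiss k p.1 hx p.2 hy
  choose! B hBα hBU using hescape
  obtain ⟨γ, hγ⟩ := exists_upper_bound_of_finite_of_eq_below α
    (fun k => B k '' ↑(F (n k) ×ˢ E (n k))) (fun k => Set.toFinite _)
    (by rintro k _ ⟨p, hp, rfl⟩; exact hBα k p hp)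
  obtain ⟨m, hm⟩ := hFE (U γ) (hmem γ)
  obtain ⟨x, hx, y, hy, hxy⟩ := hm (n m) (hn m)
  have hp : (x, y) ∈ F (n m) ×ˢ E (n m) := Finset.mk_mem_product hx hy
  exact hBU m _ hp (hmono _ _ (hγ m _ ⟨_, hp, rfl⟩) hxy)

/-- Let `(U_α)_{α ∈ ω^ω}` be a `𝔊`-base of the uniformity of a uniform space `X` and let
`(F_n)`, `(E_n)` be sequences of finite subsets of `X` such that for every entourage `U`
there is `k` with `(F_n × E_n) ∩ U ≠ ∅` for all `n ≥ k`. Then for every `α ∈ ω^ω` there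
is `k ∈ ω` such that `(F_n × E_n) ∩ U_{α|k} ≠ ∅` for every `n ≥ k`, where
`U_{α|k} = ⋂ {U_β : β|k = α|k}`. -/
theorem exists_k_meets_restricted_entourage
    {X : Type*} [UniformSpace X]
    (U : (ℕ → ℕ) → Set (X × X))
    (hmem : ∀ α, U α ∈ uniformity X)
    (hbase : ∀ V ∈ uniformity X, ∃ α, U α ⊆ V)
    (hmono : ∀ α β : ℕ → ℕ, α ≤ β → U β ⊆ U α)
    (F E : ℕ → Finset X)
    (hFE : ∀ V ∈ uniformity X, ∃ k : ℕ, ∀ n ≥ k, ∃ x ∈ F n, ∃ y ∈ E n, (x, y) ∈ V)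
    (α : ℕ → ℕ) :
    ∃ k : ℕ, ∀ n ≥ k, ∃ x ∈ F n, ∃ y ∈ E n,
      (x, y) ∈ ⋂ β ∈ {β : ℕ → ℕ | ∀ i < k, β i = α i}, U β :=
  exists_k_meets_restricted_entourage_general U hmem hmono F E hFE α
end

section
/- Let X be a uniform space whose uniformity has a 𝔊-base (U_α)_{α∈ω^ω}, and for α ∈ ω^ω and k ∈ ω put U_{α|k} = ⋂ {U_β : β ∈ ω^ω, β(i) = α(i) for all i < k}. If the topological space X (with the topology induced by the uniformity) is strongly open-Reznichenko at a point x ∈ X, then for every α ∈ ω^ω there exists k ∈ ω such that the closure of the set U_{α|k}[x] = {y ∈ X : (x,y) ∈ U_{α|k}} is a neighborhood of x. -/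
/-- A topological space `X` is strongly open-Reznichenko at a point `x` if for every
decreasing sequence `(V_n)` of open sets with `x ∈ ⋂_n cl(V_n)` there is a sequence
`(F_n)` of finite sets `F_n ⊆ V_n` such that every neighborhood of `x` meets all but
finitely many of the sets `F_n`. -/
def StrongOpenReznichenkoAt (X : Type*) [TopologicalSpace X] (x : X) : Prop :=
  ∀ V : ℕ → Set X, (∀ n, IsOpen (V n)) → (∀ n, V (n + 1) ⊆ V n) →
    (∀ n, x ∈ closure (V n)) →
    ∃ F : ℕ → Finset X, (∀ n, ↑(F n) ⊆ V n) ∧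
      ∀ O ∈ nhds x, ∃ k : ℕ, ∀ n ≥ k, ∃ y ∈ F n, y ∈ O

/-!
Suppose no closure of a ball `U_{α|k}[x]` is a neighbourhood of `x`. The complements of these
closures form a decreasing sequence of open sets accumulating at `x`, so strong
open-Reznichenkoness yields finite sets `F_k` outside `U_{α|k}[x]` converging to `x`. Each
`y ∈ F_k` is witnessed outside `U_β[x]` by some `β` agreeing with `α` below `k`; since only the
finitely many sets `F_0, …, F_i` contribute to coordinate `i`, a single `γ` dominates all these
witnesses. Then `U_γ[x]` is a neighbourhood of `x` missing every `F_k`, a contradiction.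
-/

open Filter Topology UniformSpace

theorem exists_ge_of_eq_below {ι : Type*} (α : ℕ → ℕ) (F : ℕ → Finset ι)
    (β : ℕ → ι → ℕ → ℕ) (hβ : ∀ n, ∀ y ∈ F n, ∀ i < n, β n y i = α i) :
    ∃ γ : ℕ → ℕ, ∀ n, ∀ y ∈ F n, β n y ≤ γ := by
  refine ⟨fun i => max (α i) ((Finset.range (i + 1)).sup fun n => (F n).sup fun y => β n y i),
    fun n y hy i => ?_⟩
  by_cases hin : i < n
  · exact (hβ n y hy i hin).trans_le (le_max_left _ _)
  · have hn : n ∈ Finset.range (i + 1) := Finset.mem_range.mpr (by omega)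
    calc β n y i ≤ (F n).sup fun y => β n y i := Finset.le_sup (f := fun y => β n y i) hy
      _ ≤ (Finset.range (i + 1)).sup fun n => (F n).sup fun y => β n y i :=
          Finset.le_sup (f := fun n => (F n).sup fun y => β n y i) hn
      _ ≤ _ := le_max_right _ _

theorem StrongOpenReznichenkoAt.exists_finset_disjoint {X : Type*} [TopologicalSpace X] {x : X}
    (hx : StrongOpenReznichenkoAt X x) {B : ℕ → Set X} (hB : Monotone B)
    (hnhds : ∀ k, closure (B k) ∉ 𝓝 x) :
    ∃ F : ℕ → Finset X, (∀ n, Disjoint (F n : Set X) (B n)) ∧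
      ∀ O ∈ 𝓝 x, ∃ k, ∀ n ≥ k, ∃ y ∈ F n, y ∈ O := by
  have hW : ∀ k, x ∈ closure (closure (B k))ᶜ := fun k => by
    rw [closure_compl, Set.mem_compl_iff, mem_interior_iff_mem_nhds]
    exact hnhds k
  obtain ⟨F, hF, hconv⟩ := hx (fun k => (closure (B k))ᶜ) (fun _ => isClosed_closure.isOpen_compl)
    (fun k => Set.compl_subset_compl.2 (closure_mono (hB k.le_succ))) hW
  exact ⟨F, fun n => Set.subset_compl_iff_disjoint_right.1 ((hF n).trans
    (Set.compl_subset_compl.2 subset_closure)), hconv⟩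

theorem monotone_biInter_eq_below {Y : Type*} (U : (ℕ → ℕ) → Set Y) (α : ℕ → ℕ) :
    Monotone fun k => ⋂ β ∈ {β : ℕ → ℕ | ∀ i < k, β i = α i}, U β :=
  fun _ _ hkl => Set.biInter_subset_biInter_left fun _ hβ i hi => hβ i (hi.trans_le hkl)

theorem closure_restricted_ball_mem_nhds_general
    {X : Type*} [UniformSpace X]
    (U : (ℕ → ℕ) → Set (X × X))
    (hmem : ∀ α, U α ∈ uniformity X)
    (hmono : ∀ α β : ℕ → ℕ, α ≤ β → U β ⊆ U α)
    (x : X) (hx : StrongOpenReznichenkoAt X x)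
    (α : ℕ → ℕ) :
    ∃ k : ℕ,
      closure {y : X | (x, y) ∈ ⋂ β ∈ {β : ℕ → ℕ | ∀ i < k, β i = α i}, U β} ∈ nhds x := by
  by_contra! hcon
  obtain ⟨F, hFB, hconv⟩ := hx.exists_finset_disjoint
    (fun _ _ hkl => Set.preimage_mono (monotone_biInter_eq_below U α hkl)) hcon
  have hwit : ∀ n, ∀ y ∈ F n, ∃ β : ℕ → ℕ, (∀ i < n, β i = α i) ∧ (x, y) ∉ U β := by
    intro n y hy
    simpa using Set.disjoint_left.1 (hFB n) hy
  choose! β hβα hβU using hwit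
  obtain ⟨γ, hγ⟩ := exists_ge_of_eq_below α F β hβα
  obtain ⟨k, hk⟩ := hconv _ (ball_mem_nhds x (hmem γ))
  obtain ⟨y, hyF, hyγ⟩ := hk k le_rfl
  exact hβU k y hyF (hmono _ _ (hγ k y hyF) hyγ)

/-- Let `(U_α)_{α ∈ ω^ω}` be a `𝔊`-base of the uniformity of a uniform space `X`. If `X`
is strongly open-Reznichenko at a point `x`, then for every `α ∈ ω^ω` there is `k ∈ ω`
such that the closure of the ball `U_{α|k}[x]` is a neighborhood of `x`, where
`U_{α|k} = ⋂ {U_β : β|k = α|k}`. -/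
theorem closure_restricted_ball_mem_nhds
    {X : Type*} [UniformSpace X]
    (U : (ℕ → ℕ) → Set (X × X))
    (hmem : ∀ α, U α ∈ uniformity X)
    (hbase : ∀ V ∈ uniformity X, ∃ α, U α ⊆ V)
    (hmono : ∀ α β : ℕ → ℕ, α ≤ β → U β ⊆ U α)
    (x : X) (hx : StrongOpenReznichenkoAt X x)
    (α : ℕ → ℕ) :
    ∃ k : ℕ,
      closure {y : X | (x, y) ∈ ⋂ β ∈ {β : ℕ → ℕ | ∀ i < k, β i = α i}, U β} ∈ nhds x :=
  closure_restricted_ball_mem_nhds_general U hmem hmono x hx α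
end

section
/- If a topological space X is σ-bounded, then the set C(X) of continuous real-valued functions on X is ω^ω-dominated in ℝ^X. -/
/-!
Pick for every point `x` the index `n(x)` of a piece `B n(x)` containing it and put
`φ α x = α (n x)`. A continuous `f` is bounded above on each piece, say by the integer `α n`
on `B n`, so `f ≤ φ α`.
-/

open Set

section CountableCover

variable {X : Type*} {B : ℕ → Set X}

noncomputable def coverIndex (hB : ⋃ n, B n = univ) (x : X) : ℕ :=
  (mem_iUnion.mp (hB ▸ mem_univ x)).choose

theorem mem_coverIndex (hB : ⋃ n, B n = univ) (x : X) : x ∈ B (coverIndex hB x) :=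
  (mem_iUnion.mp (hB ▸ mem_univ x)).choose_spec

noncomputable def coverDominator (hB : ⋃ n, B n = univ) (α : ℕ → ℕ) (x : X) : ℝ :=
  α (coverIndex hB x)

theorem monotone_coverDominator (hB : ⋃ n, B n = univ) : Monotone (coverDominator hB) :=
  fun _ _ hαβ x => Nat.cast_le.mpr (hαβ (coverIndex hB x))

theorem le_coverDominator (hB : ⋃ n, B n = univ) {f : X → ℝ} {α : ℕ → ℕ}
    (hf : ∀ n, ∀ x ∈ B n, f x ≤ α n) : f ≤ coverDominator hB α :=
  fun x => hf _ x (mem_coverIndex hB x)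

theorem exists_nat_bound_of_bddAbove_image {f : X → ℝ} (hf : ∀ n, BddAbove (f '' B n)) :
    ∃ α : ℕ → ℕ, ∀ n, ∀ x ∈ B n, f x ≤ α n := by
  choose M hM using hf
  exact ⟨fun n => ⌈M n⌉₊, fun n x hx => (hM n ⟨x, hx, rfl⟩).trans (Nat.le_ceil (M n))⟩

theorem exists_monotone_dominating_of_iUnion_eq_univ (hB : ⋃ n, B n = univ) :
    ∃ φ : (ℕ → ℕ) → (X → ℝ), Monotone φ ∧
      ∀ f : X → ℝ, (∀ n, BddAbove (f '' B n)) → ∃ α : ℕ → ℕ, f ≤ φ α := by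
  refine ⟨coverDominator hB, monotone_coverDominator hB, fun f hf => ?_⟩
  obtain ⟨α, hα⟩ := exists_nat_bound_of_bddAbove_image hf
  exact ⟨α, le_coverDominator hB hα⟩

end CountableCover

/-- If a topological space `X` is σ-bounded (a countable union of sets on which every
continuous real function is bounded), then the set `C(X)` of continuous real functions
is `ω^ω`-dominated in `ℝ^X`. -/
theorem continuous_dominated_of_sigmaBounded
    {X : Type*} [TopologicalSpace X]
    (h : ∃ B : ℕ → Set X,
      (∀ n, ∀ f : X → ℝ, Continuous f → Bornology.IsBounded (f '' B n)) ∧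
      (⋃ n, B n) = Set.univ) :
    ∃ φ : (ℕ → ℕ) → (X → ℝ), Monotone φ ∧
      ∀ f : X → ℝ, Continuous f → ∃ α : ℕ → ℕ, f ≤ φ α := by
  obtain ⟨B, hbdd, hcover⟩ := h
  obtain ⟨φ, hφ, hdom⟩ := exists_monotone_dominating_of_iUnion_eq_univ hcover
  exact ⟨φ, hφ, fun f hf => hdom f fun n => (hbdd n f hf).bddAbove⟩
end

section
/- If X is a metrizable σ-compact topological space, then the poset C(X) of continuous real-valued functions on X (with the pointwise order) is ω^ω-dominated: there exists a monotone cofinal map from ω^ω to C(X), i.e., a family (f_α)_{α∈ω^ω} of continuous functions with f_α ≤ f_β for α ≤ β such that every f ∈ C(X) satisfies f ≤ f_α for some α ∈ ω^ω. -/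
/-!
Fix a metric and a cover of `X` by compact sets `K n`. A continuous `f` is bounded, say by `m n`,
on some `(k n + 1)⁻¹`-neighbourhood of `K n`, and a single `α : ℕ → ℕ` encodes both sequences `m`
and `k`. The dominating function is the infimum over `n` of barriers that are at least `n + m n`,
finite on `K n` and infinite off its `(k n + 1)⁻¹`-neighbourhood. It is continuous because the
`n`-th barrier exceeds `n`: near each point the infimum runs over finitely many continuous functions.
-/

open Filter Metric Topology
open scoped ENNReal

section LocallyFiniteInf

variable {X : Type*} [TopologicalSpace X]

theorem continuous_iInf_of_natCast_le {T : ℕ → X → ℝ≥0∞} (hT : ∀ n, Continuous (T n))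
    (hle : ∀ (n : ℕ) x, (n : ℝ≥0∞) ≤ T n x) : Continuous fun x => ⨅ n, T n x := by
  refine continuous_iff_lower_upperSemicontinuous.2
    ⟨fun x y hy => ?_, upperSemicontinuous_iInf fun n => (hT n).upperSemicontinuous⟩
  obtain ⟨z, hyz, hzT⟩ := exists_between hy
  obtain ⟨N, hzN⟩ := ENNReal.exists_nat_gt hzT.ne_top
  have hnear : ∀ᶠ x' in 𝓝 x, ∀ n ∈ Finset.range N, z < T n x' :=
    (eventually_all_finset _).2 fun n _ =>
      (hT n).continuousAt.eventually (lt_mem_nhds (hzT.trans_le (iInf_le _ n)))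
  filter_upwards [hnear] with x' hx'
  refine hyz.trans_le (le_iInf fun n => ?_)
  rcases lt_or_ge n N with hn | hn
  · exact (hx' n (Finset.mem_range.2 hn)).le
  · exact hzN.le.trans ((Nat.cast_le.2 hn).trans (hle n x'))

end LocallyFiniteInf

section Barrier

variable {X : Type*} [PseudoEMetricSpace X]

theorem IsCompact.exists_le_natCast_of_infEDist_lt {K : Set X}
    (hK : IsCompact K) {f : X → ℝ} (hf : Continuous f) :
    ∃ m k : ℕ, ∀ y, infEDist y K < (k + 1 : ℝ≥0∞)⁻¹ → f y ≤ m := by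
  obtain ⟨M, hM⟩ := hK.bddAbove_image hf.continuousOn
  have hKU : K ⊆ {y | f y < M + 1} := fun y hy => (hM ⟨y, hy, rfl⟩).trans_lt (lt_add_one M)
  obtain ⟨δ, hδ, hδU⟩ := hK.exists_thickening_subset_open (isOpen_lt hf continuous_const) hKU
  obtain ⟨k, hk⟩ := ENNReal.exists_inv_nat_lt (ENNReal.ofReal_pos.2 hδ).ne'
  refine ⟨⌈M + 1⌉₊, k, fun y hy => (hδU ?_).le.trans (Nat.le_ceil _)⟩
  refine mem_thickening_iff_infEDist_lt.2 (hy.trans (lt_of_le_of_lt ?_ hk))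
  exact ENNReal.inv_le_inv.2 le_self_add

/-- Truncated subtraction in `ℝ≥0∞` makes this `∞` off the open `(k + 1)⁻¹`-neighbourhood of `K`. -/
noncomputable def barrier (K : Set X) (m k : ℕ) (x : X) : ℝ≥0∞ :=
  m + ((k + 1 : ℝ≥0∞)⁻¹ - infEDist x K)⁻¹

theorem continuous_barrier (K : Set X) (m k : ℕ) : Continuous (barrier K m k) :=
  continuous_const.add <| continuous_inv.comp <|
    (ENNReal.continuous_sub_left (by simp)).comp continuous_infEDist

theorem natCast_le_barrier (K : Set X) (m k : ℕ) (x : X) : (m : ℝ≥0∞) ≤ barrier K m k x :=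
  le_self_add

theorem barrier_ne_top_of_mem {K : Set X} {x : X} (hx : x ∈ K) (m k : ℕ) :
    barrier K m k x ≠ ∞ := by
  simp [barrier, infEDist_zero_of_mem hx]

theorem barrier_eq_top {K : Set X} {x : X} {m k : ℕ} (hx : (k + 1 : ℝ≥0∞)⁻¹ ≤ infEDist x K) :
    barrier K m k x = ∞ := by
  simp [barrier, tsub_eq_zero_of_le hx]

theorem barrier_mono (K : Set X) {m m' k k' : ℕ} (hm : m ≤ m') (hk : k ≤ k') :
    barrier K m k ≤ barrier K m' k' := fun x => by
  unfold barrier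
  gcongr

theorem ofReal_le_barrier {K : Set X} {f : X → ℝ} {m k : ℕ}
    (hf : ∀ y, infEDist y K < (k + 1 : ℝ≥0∞)⁻¹ → f y ≤ m) (x : X) :
    ENNReal.ofReal (f x) ≤ barrier K m k x := by
  rcases lt_or_ge (infEDist x K) (k + 1 : ℝ≥0∞)⁻¹ with hx | hx
  · exact (ENNReal.ofReal_le_of_le_toReal (by simpa using hf x hx)).trans
      (natCast_le_barrier K m k x)
  · simp [barrier_eq_top hx]

noncomputable def barrierEnvelope (K : ℕ → Set X) (m k : ℕ → ℕ) (x : X) : ℝ≥0∞ :=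
  ⨅ n, barrier (K n) (n + m n) (k n) x

theorem continuous_barrierEnvelope (K : ℕ → Set X) (m k : ℕ → ℕ) :
    Continuous (barrierEnvelope K m k) :=
  continuous_iInf_of_natCast_le (fun _ => continuous_barrier _ _ _) fun n x =>
    (Nat.cast_le.2 (Nat.le_add_right n (m n))).trans (natCast_le_barrier _ _ _ x)

theorem barrierEnvelope_ne_top {K : ℕ → Set X} (hK : ∀ x, ∃ n, x ∈ K n) (m k : ℕ → ℕ)
    (x : X) : barrierEnvelope K m k x ≠ ∞ :=
  let ⟨n, hn⟩ := hK x
  ne_top_of_le_ne_top (barrier_ne_top_of_mem hn _ _) (iInf_le _ n)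

theorem barrierEnvelope_mono (K : ℕ → Set X) {m m' k k' : ℕ → ℕ} (hm : m ≤ m') (hk : k ≤ k') :
    barrierEnvelope K m k ≤ barrierEnvelope K m' k' := fun x =>
  iInf_mono fun n => barrier_mono (K n) (Nat.add_le_add_left (hm n) n) (hk n) x

theorem exists_ofReal_le_barrierEnvelope {K : ℕ → Set X} (hK : ∀ n, IsCompact (K n))
    {f : X → ℝ} (hf : Continuous f) :
    ∃ m k : ℕ → ℕ, ∀ x, ENNReal.ofReal (f x) ≤ barrierEnvelope K m k x := by
  choose m k hmk using fun n => (hK n).exists_le_natCast_of_infEDist_lt hf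
  refine ⟨m, k, fun x => le_iInf fun n => ofReal_le_barrier (fun y hy => ?_) x⟩
  exact (hmk n y hy).trans (Nat.cast_le.2 (Nat.le_add_left _ _))

end Barrier

/-- If `X` is a metrizable σ-compact topological space, then the poset `C(X)` of
continuous real functions on `X` (pointwise order) is `ω^ω`-dominated: there is a
monotone cofinal map from `ω^ω` to `C(X)`. -/
theorem continuous_dominated_of_metrizable_sigmaCompact
    {X : Type*} [TopologicalSpace X] [TopologicalSpace.MetrizableSpace X]
    [SigmaCompactSpace X] :
    ∃ φ : (ℕ → ℕ) → (X → ℝ), (∀ α, Continuous (φ α)) ∧ Monotone φ ∧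
      ∀ f : X → ℝ, Continuous f → ∃ α : ℕ → ℕ, f ≤ φ α := by
  let := TopologicalSpace.metrizableSpaceMetric X
  have hK : ∀ x, ∃ n, x ∈ compactCovering X n := exists_mem_compactCovering
  let e := Equiv.natSumNatEquivNat
  let ψ : (ℕ → ℕ) → X → ℝ≥0∞ := fun α =>
    barrierEnvelope (compactCovering X) (fun n => α (e (.inl n))) (fun n => α (e (.inr n)))
  refine ⟨fun α x => (ψ α x).toReal, fun α => ?_, fun α β hαβ x => ?_, fun f hf => ?_⟩
  · exact ENNReal.continuousOn_toReal.comp_continuous (continuous_barrierEnvelope _ _ _)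
      (barrierEnvelope_ne_top hK _ _)
  · exact ENNReal.toReal_mono (barrierEnvelope_ne_top hK _ _ x)
      (barrierEnvelope_mono _ (fun _ => hαβ _) (fun _ => hαβ _) x)
  · obtain ⟨m, k, hmk⟩ := exists_ofReal_le_barrierEnvelope (isCompact_compactCovering X) hf
    refine ⟨Sum.elim m k ∘ e.symm, fun x => ?_⟩
    rw [← ENNReal.ofReal_le_iff_le_toReal (barrierEnvelope_ne_top hK _ _ x)]
    simpa [ψ] using hmk x
end

section
/- Let X ⊆ {0,1}^{ω₁} be the set of all functions x : ω₁ → {0,1} with finite support x^{-1}(1), endowed with the topology induced by the uniformity generated by the base {U_α : α < ω₁}, where U_α = {(x,y) ∈ X×X : x(γ) = y(γ) for all γ < α}. Then X has countable extent (every closed discrete subset of X is countable) and X is not separable (no countable subset of X is dense). -/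
/-- The first uncountable ordinal `ω₁`. -/
noncomputable def omega1Ord : Ordinal := (Cardinal.aleph 1).ord

/-- The ordinals below `ω₁`. -/
abbrev Idx : Type 1 := {o : Ordinal // o < omega1Ord}

/-- The σ-product of `ω₁` doubletons: all functions `x : ω₁ → {0,1}` with finite
support `x⁻¹(1)`. -/
def SigmaProd : Type 1 := {x : Idx → Bool // {γ : Idx | x γ = true}.Finite}

/-- The `U_α`-ball around `x`: all `y` agreeing with `x` at every coordinate `γ < α`. -/
def sigmaBall (x : SigmaProd) (α : Idx) : Set SigmaProd :=
  {y : SigmaProd | ∀ γ : Idx, γ < α → y.1 γ = x.1 γ}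

/-- The topology on the σ-product induced by the uniformity generated by the
base `{U_α : α < ω₁}`, `U_α = {(x,y) : x(γ) = y(γ) for all γ < α}`: its open sets are
the sets `W` such that every `x ∈ W` contains some ball `U_α[x]` inside `W`;
equivalently, the topology generated by all the balls `U_α[x]`. -/
instance : TopologicalSpace SigmaProd :=
  TopologicalSpace.generateFrom {S : Set SigmaProd | ∃ x α, S = sigmaBall x α}

/-! An uncountable set `D ⊆ X` has an accumulation point, so it is not closed discrete. Since
there are only countably many support sizes, we may assume all points of `D` have supports of
the same size `n`, and induct on `n`. Either `0` is an accumulation point of `D`, or some ball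
`U_α[0]` meets `D` only in `0`; then every other point of `D` has a support point below `α`, and
as `α` is countable, uncountably many of them share a support point `β`. Flipping coordinate
`β` is a homeomorphism of `X` (it preserves every `U_α`) that shrinks these supports to size
`n - 1`, and it carries an accumulation point given by induction back to one of `D`.

`X` is not separable: the supports of countably many points miss some `β < ω₁`, and the open
ball `U_{β+1}` around the indicator of `{β}` contains none of them. -/

open Set Filter Topology TopologicalSpace Cardinal

lemma omega1Ord_isSuccLimit : Order.IsSuccLimit omega1Ord :=
  isSuccLimit_ord (aleph0_le_aleph 1)

instance : Inhabited Idx := ⟨⟨0, omega1Ord_isSuccLimit.pos⟩⟩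

instance : NoMaxOrder Idx :=
  ⟨fun α => ⟨⟨Order.succ α.1, omega1Ord_isSuccLimit.succ_lt α.2⟩, Order.lt_succ α.1⟩⟩

instance : Uncountable Idx := by
  rw [← not_countable_iff, ← mk_le_aleph0_iff, not_le]
  show ℵ₀ < #(Iio omega1Ord)
  rw [mk_Iio_ordinal, omega1Ord, card_ord, aleph0_lt_lift]
  exact aleph0_lt_aleph_one

lemma Idx.countable_Iio (α : Idx) : (Iio α).Countable := by
  have hα : (Iio α.1).Countable := by
    rw [← le_aleph0_iff_set_countable, mk_Iio_ordinal, lift_le_aleph0, ← lt_aleph_one_iff]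
    exact lt_ord.mp α.2
  exact hα.preimage Subtype.val_injective

namespace SigmaProd

def support (x : SigmaProd) : Set Idx := {γ | x.1 γ = true}

lemma finite_support (x : SigmaProd) : x.support.Finite := x.2

@[simp]
lemma mem_support {x : SigmaProd} {γ : Idx} : γ ∈ x.support ↔ x.1 γ = true := Iff.rfl

lemma ext {x y : SigmaProd} (h : ∀ γ, x.1 γ = y.1 γ) : x = y :=
  Subtype.ext (funext h)

def zero : SigmaProd := ⟨fun _ => false, by simp⟩

lemma eq_zero_of_support_eq_empty {x : SigmaProd} (h : x.support = ∅) : x = zero :=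
  ext fun γ => by simpa [support, zero] using Set.ext_iff.mp h γ

noncomputable def toggle (β : Idx) (x : SigmaProd) : SigmaProd :=
  ⟨fun γ => x.1 γ ^^ decide (γ = β), (x.2.union (finite_singleton β)).subset fun γ => by
    by_cases h : γ = β <;> simp_all⟩

lemma toggle_toggle (β : Idx) (x : SigmaProd) : toggle β (toggle β x) = x :=
  ext fun γ => by simp [toggle]

lemma toggle_injective (β : Idx) : Function.Injective (toggle β) :=
  Function.LeftInverse.injective (toggle_toggle β)

lemma toggle_apply_self (β : Idx) (x : SigmaProd) : (toggle β x).1 β = !x.1 β := by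
  simp [toggle]

lemma support_toggle_of_mem {β : Idx} {x : SigmaProd} (h : β ∈ x.support) :
    (toggle β x).support = x.support \ {β} := by
  ext γ
  by_cases hγ : γ = β
  · subst hγ; simp_all [support, toggle]
  · simp [support, toggle, hγ]

lemma preimage_toggle_sigmaBall (β : Idx) (x : SigmaProd) (α : Idx) :
    toggle β ⁻¹' sigmaBall x α = sigmaBall (toggle β x) α := by
  ext y
  have h : ∀ γ, (toggle β y).1 γ = x.1 γ ↔ y.1 γ = (toggle β x).1 γ := fun γ => by
    simp only [toggle]; cases y.1 γ <;> cases x.1 γ <;> simp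
  simp only [mem_preimage, sigmaBall, mem_ofPred_eq, h]

lemma mem_sigmaBall_self (x : SigmaProd) (α : Idx) : x ∈ sigmaBall x α := fun _ _ => rfl

lemma sigmaBall_anti (x : SigmaProd) : Antitone (sigmaBall x) :=
  fun _ _ hαβ _ hy γ hγ => hy γ (hγ.trans_le hαβ)

lemma sigmaBall_eq_of_mem {x y : SigmaProd} {α : Idx} (h : y ∈ sigmaBall x α) :
    sigmaBall y α = sigmaBall x α := by
  ext z
  exact forall₂_congr fun γ hγ => by rw [h γ hγ]

lemma isTopologicalBasis_sigmaBall :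
    IsTopologicalBasis {S : Set SigmaProd | ∃ x α, S = sigmaBall x α} where
  exists_subset_inter := by
    rintro _ ⟨x, α, rfl⟩ _ ⟨y, β, rfl⟩ z ⟨hzx, hzy⟩
    refine ⟨sigmaBall z (max α β), ⟨z, _, rfl⟩, mem_sigmaBall_self z _, ?_⟩
    rw [← sigmaBall_eq_of_mem hzx, ← sigmaBall_eq_of_mem hzy]
    exact subset_inter (sigmaBall_anti z le_sup_left) (sigmaBall_anti z le_sup_right)
  sUnion_eq := sUnion_eq_univ_iff.2 fun x => ⟨_, ⟨x, default, rfl⟩, mem_sigmaBall_self x default⟩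
  eq_generateFrom := rfl

lemma nhds_hasBasis_sigmaBall (x : SigmaProd) :
    (𝓝 x).HasBasis (fun _ : Idx => True) (sigmaBall x) := by
  refine ⟨fun U => isTopologicalBasis_sigmaBall.mem_nhds_iff.trans ⟨?_, ?_⟩⟩
  · rintro ⟨_, ⟨y, α, rfl⟩, hx, hU⟩
    exact ⟨α, trivial, (sigmaBall_eq_of_mem hx).symm ▸ hU⟩
  · rintro ⟨α, -, hU⟩
    exact ⟨_, ⟨x, α, rfl⟩, mem_sigmaBall_self x α, hU⟩

lemma isOpen_sigmaBall (x : SigmaProd) (α : Idx) : IsOpen (sigmaBall x α) :=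
  isTopologicalBasis_sigmaBall.isOpen ⟨x, α, rfl⟩

lemma continuous_toggle (β : Idx) : Continuous (toggle β) :=
  continuous_generateFrom_iff.2 fun _ ⟨x, α, hS⟩ =>
    hS ▸ preimage_toggle_sigmaBall β x α ▸ isOpen_sigmaBall _ α

lemma accPt_iff_sigmaBall {x : SigmaProd} {D : Set SigmaProd} :
    AccPt x (𝓟 D) ↔ ∀ α, ∃ y ∈ sigmaBall x α, y ≠ x ∧ y ∈ D := by
  simp only [accPt_iff_frequently, (nhds_hasBasis_sigmaBall x).frequently_iff, true_imp_iff]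

lemma accPt_toggle_image {x : SigmaProd} {D : Set SigmaProd} (h : AccPt x (𝓟 D)) (β : Idx) :
    AccPt (toggle β x) (𝓟 (toggle β '' D)) := by
  simpa only [map_principal] using
    h.map (continuous_toggle β).continuousAt (toggle_injective β)

lemma countable_of_support_eq_empty {D : Set SigmaProd} (hD : ∀ d ∈ D, d.support = ∅) :
    D.Countable :=
  (countable_singleton zero).mono fun d hd => eq_zero_of_support_eq_empty (hD d hd)

lemma exists_not_countable_support_mem_of_not_accPt_zero {D : Set SigmaProd}
    (hD : ¬D.Countable) (h0 : ¬AccPt zero (𝓟 D)) :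
    ∃ β, ¬{d ∈ D | β ∈ d.support}.Countable := by
  obtain ⟨α, hα⟩ := not_forall.1 (mt accPt_iff_sigmaBall.2 h0)
  by_contra! hβ
  refine hD ((((Idx.countable_Iio α).biUnion fun β _ => hβ β).insert zero).mono fun d hd => ?_)
  by_cases hd0 : d = zero
  · exact .inl hd0
  obtain ⟨γ, hγα, hγ⟩ : ∃ γ < α, d.1 γ ≠ false :=
    by simpa [sigmaBall, zero] using fun hball => hα ⟨d, hball, hd0, hd⟩
  exact .inr (mem_biUnion hγα ⟨hd, by simpa using hγ⟩)

lemma exists_accPt_of_ncard_support_eq (n : ℕ) {D : Set SigmaProd}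
    (hn : ∀ d ∈ D, d.support.ncard = n) (hD : ¬D.Countable) : ∃ x, AccPt x (𝓟 D) := by
  induction n generalizing D with
  | zero =>
    exact absurd (countable_of_support_eq_empty fun d hd => (ncard_eq_zero d.2).1 (hn d hd)) hD
  | succ n ih =>
    by_cases h0 : AccPt zero (𝓟 D)
    · exact ⟨zero, h0⟩
    obtain ⟨β, hβ⟩ := exists_not_countable_support_mem_of_not_accPt_zero hD h0
    have hE : ¬(toggle β '' {d ∈ D | β ∈ d.support}).Countable := fun h =>
      hβ (countable_of_injective_of_countable_image (toggle_injective β).injOn h)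
    have hsupp : ∀ e ∈ toggle β '' {d ∈ D | β ∈ d.support}, e.support.ncard = n := by
      rintro _ ⟨d, ⟨hd, hdβ⟩, rfl⟩
      rw [support_toggle_of_mem hdβ, ncard_sdiff_singleton_of_mem hdβ, hn d hd,
        Nat.add_sub_cancel]
    obtain ⟨x, hx⟩ := ih hsupp hE
    refine ⟨toggle β x, (accPt_toggle_image hx β).mono (principal_mono.2 ?_)⟩
    simpa only [image_image, toggle_toggle, image_id'] using sep_subset D _

lemma countable_of_isClosed_of_discreteTopology {D : Set SigmaProd} (hclosed : IsClosed D)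
    (hdiscrete : DiscreteTopology D) : D.Countable := by
  by_contra hD
  obtain ⟨n, hn⟩ : ∃ n : ℕ, ¬{d ∈ D | d.support.ncard = n}.Countable := by
    by_contra! h
    refine hD ((countable_iUnion h).mono fun d hd => ?_)
    exact mem_iUnion_of_mem _ ⟨hd, rfl⟩
  obtain ⟨x, hx⟩ := exists_accPt_of_ncard_support_eq n (fun d hd => hd.2) hn
  have hdisj :=
    isClosed_and_discrete_iff.1 ⟨hclosed, isDiscrete_iff_discreteTopology.2 hdiscrete⟩ x
  exact (hx.mono (principal_mono.2 (sep_subset D _))).ne hdisj.eq_bot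

lemma not_dense_of_countable {C : Set SigmaProd} (hC : C.Countable) : ¬Dense C := by
  intro hdense
  obtain ⟨β, hβ⟩ : ∃ β : Idx, ∀ c ∈ C, β ∉ c.support := by
    by_contra! h
    exact not_countable_univ ((hC.biUnion fun c _ => c.finite_support.countable).mono
      fun β _ => let ⟨c, hcC, hβc⟩ := h β; mem_biUnion hcC hβc)
  obtain ⟨α, hβα⟩ := exists_gt β
  obtain ⟨c, hcC, hc⟩ := hdense.exists_mem_open (isOpen_sigmaBall (toggle β zero) α)
    ⟨_, mem_sigmaBall_self _ α⟩
  exact hβ c hcC (by rw [mem_support, hc β hβα, toggle_apply_self]; rfl)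

end SigmaProd

/-- The σ-product of `ω₁` doubletons with the `ω`-box topology has countable extent
(each closed discrete subset is countable) but is not separable. -/
theorem sigmaProd_countable_extent_and_not_separable :
    (∀ D : Set SigmaProd, IsClosed D → DiscreteTopology ↥D → D.Countable) ∧
    ¬ ∃ C : Set SigmaProd, C.Countable ∧ Dense C :=
  ⟨fun _ => SigmaProd.countable_of_isClosed_of_discreteTopology,
    fun ⟨_, hC, hdense⟩ => SigmaProd.not_dense_of_countable hC hdense⟩
end
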